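/- arXiv:math/9711209 — 6 statements merged into one kernel-verified Lean document; each statement's English description precedes it below -/
import Mathlib

section
/- Lemma 2.1. Let {α_I}_{I∈𝒟} be a sequence of nonnegative numbers and let w be a weight. Then there exists C₁ such that Σ_{I∈𝒟} ⟨f w^{1/2}⟩_I² α_I ≤ C₁ ‖f‖₂² for every f ∈ L²[0,1) if and only if there exists C₂ such that for every J ∈ 𝒟, (1/|J|) Σ_{I⊆J, I∈𝒟} ⟨w⟩_I² α_I ≤ C₂ ⟨w⟩_J. -/
/-!
Lemma 2.1: for a nonnegative sequence `{α_I}` and a weight `w`, the embedding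
`Σ_I ⟨f w^{1/2}⟩_I² α_I ≤ C₁ ‖f‖₂²` for all `f ∈ L²` holds iff the Carleson
condition `(1/|J|) Σ_{I⊆J} ⟨w⟩_I² α_I ≤ C₂ ⟨w⟩_J` holds for all dyadic `J`.
-/

open MeasureTheory Set
open scoped ENNReal Classical

noncomputable section

/-- The dyadic interval `[k/2^n, (k+1)/2^n)`. -/
def dyad (n k : ℕ) : Set ℝ := Set.Ico ((k : ℝ) / 2 ^ n) (((k : ℝ) + 1) / 2 ^ n)

/-- The length of a dyadic interval of generation `n`. -/
def dlen (n : ℕ) : ℝ := ((1 : ℝ) / 2) ^ n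

/-- The average `⟨u⟩_I` of `u` over the dyadic interval `I = dyad n k`. -/
def davg (u : ℝ → ℝ) (n k : ℕ) : ℝ := (2 : ℝ) ^ n * ∫ x in dyad n k, u x

/-- A weight: integrable on `[0,1)` and a.e. positive there. -/
def IsWeight (u : ℝ → ℝ) : Prop :=
  IntegrableOn u (Set.Ico (0 : ℝ) 1) ∧
    ∀ᵐ x ∂(volume.restrict (Set.Ico (0 : ℝ) 1)), 0 < u x


/-
Testing the embedding on `f = 1_J w^{1/2}` gives the Carleson condition, with the same constant.

Conversely, put `W_I = ∫_I w`, `g_I = ∫_I f w^{1/2}`, `G_I = ∫_I f²` and `μ_I = ⟨w⟩_I² α_I / C`,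
so that the `I`-th term of the embedding sum is `C μ_I (g_I / W_I)²` and the Carleson sums
`S_J = Σ_{I ⊆ J} μ_I` satisfy `S_J ≤ W_J`. The Bellman function `B_J = 4 (G_J - g_J² / (W_J + S_J))`
is nonnegative by Cauchy–Schwarz, and since `G`, `g`, `W` are additive over the two halves
`J₋, J₊` of `J`, the inequality `(g₁ + g₂)² / (σ₁ + σ₂) ≤ g₁² / σ₁ + g₂² / σ₂` together with
`S_J ≤ W_J` gives `μ_J (g_J / W_J)² + B_{J₋} + B_{J₊} ≤ B_J`. Summing over finite truncations of
the dyadic tree bounds the embedding sum by `C B_{[0,1)} ≤ 4 C ‖f‖₂²`.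
-/

theorem add_sq_div_add_le {g₁ g₂ σ₁ σ₂ : ℝ} (h₁ : 0 < σ₁) (h₂ : 0 < σ₂) :
    (g₁ + g₂) ^ 2 / (σ₁ + σ₂) ≤ g₁ ^ 2 / σ₁ + g₂ ^ 2 / σ₂ := by
  simpa [Fin.sum_univ_two] using
    Finset.sq_sum_div_le_sum_sq_div Finset.univ ![g₁, g₂] (g := ![σ₁, σ₂])
      (by simp [Fin.forall_fin_two, h₁, h₂])

theorem mul_sq_div_add_four_mul_sq_div_le {x W σ m : ℝ} (hσ : 0 < σ) (hm : 0 ≤ m)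
    (h : σ + m ≤ 2 * W) :
    m * (x / W) ^ 2 + 4 * (x ^ 2 / (σ + m)) ≤ 4 * (x ^ 2 / σ) := by
  have hW : 0 < W := by linarith
  have hσm : σ * (σ + m) ≤ (2 * W) ^ 2 := by nlinarith
  rw [div_pow, ← sub_nonneg]
  have : 4 * (x ^ 2 / σ) - (m * (x ^ 2 / W ^ 2) + 4 * (x ^ 2 / (σ + m))) =
      m * x ^ 2 * (4 / (σ * (σ + m)) - 1 / W ^ 2) := by
    field_simp; ring
  rw [this]
  refine mul_nonneg (by positivity) (sub_nonneg.2 ?_)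
  rw [div_le_div_iff₀ (by positivity) (by positivity)]
  nlinarith

theorem bellman_step {g₁ g₂ W₁ W₂ s₁ s₂ m : ℝ} (hW₁ : 0 < W₁) (hW₂ : 0 < W₂)
    (hs₁ : 0 ≤ s₁) (hs₂ : 0 ≤ s₂) (hm : 0 ≤ m) (h : m + s₁ + s₂ ≤ W₁ + W₂) :
    m * ((g₁ + g₂) / (W₁ + W₂)) ^ 2 + 4 * ((g₁ + g₂) ^ 2 / (W₁ + W₂ + (m + s₁ + s₂))) ≤
      4 * (g₁ ^ 2 / (W₁ + s₁)) + 4 * (g₂ ^ 2 / (W₂ + s₂)) := by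
  have hσ₁ : 0 < W₁ + s₁ := by positivity
  have hσ₂ : 0 < W₂ + s₂ := by positivity
  have hjump := mul_sq_div_add_four_mul_sq_div_le (x := g₁ + g₂) (W := W₁ + W₂)
    (add_pos hσ₁ hσ₂) hm (by linarith)
  rw [show W₁ + s₁ + (W₂ + s₂) + m = W₁ + W₂ + (m + s₁ + s₂) by ring] at hjump
  linarith [add_sq_div_add_le (g₁ := g₁) (g₂ := g₂) hσ₁ hσ₂]

theorem dyad_left_lt_right (n k : ℕ) : (k : ℝ) / 2 ^ n < ((k : ℝ) + 1) / 2 ^ n := by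
  gcongr; linarith

theorem natCast_div_two_pow_le_iff {n d a b : ℕ} :
    (a : ℝ) / 2 ^ n ≤ b / 2 ^ (n + d) ↔ a * 2 ^ d ≤ b := by
  rw [div_le_div_iff₀ (by positivity) (by positivity),
    show (a : ℝ) * 2 ^ (n + d) = a * 2 ^ d * 2 ^ n by ring, mul_le_mul_iff_left₀ (by positivity)]
  exact_mod_cast Iff.rfl

theorem natCast_div_two_pow_add_le_iff {n d a b : ℕ} :
    (b : ℝ) / 2 ^ (n + d) ≤ a / 2 ^ n ↔ b ≤ a * 2 ^ d := by
  rw [div_le_div_iff₀ (by positivity) (by positivity),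
    show (a : ℝ) * 2 ^ (n + d) = a * 2 ^ d * 2 ^ n by ring, mul_le_mul_iff_left₀ (by positivity)]
  exact_mod_cast Iff.rfl

theorem dyad_subset_iff {n' k' n k : ℕ} :
    dyad n' k' ⊆ dyad n k ↔ ∃ d, n' = n + d ∧ k * 2 ^ d ≤ k' ∧ k' + 1 ≤ (k + 1) * 2 ^ d := by
  rw [dyad, dyad, Ico_subset_Ico_iff (dyad_left_lt_right n' k')]
  constructor
  · rintro ⟨hleft, hright⟩
    have hlen : (1 : ℝ) / 2 ^ n' ≤ 1 / 2 ^ n := by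
      rw [add_div, add_div] at hright; linarith
    obtain ⟨d, rfl⟩ : ∃ d, n' = n + d := Nat.exists_eq_add_of_le <|
      (pow_le_pow_iff_right₀ one_lt_two).1 <|
        (one_div_le_one_div (by positivity) (by positivity)).1 hlen
    refine ⟨d, rfl, natCast_div_two_pow_le_iff.1 hleft, ?_⟩
    exact natCast_div_two_pow_add_le_iff.1 (by exact_mod_cast hright)
  · rintro ⟨d, rfl, hleft, hright⟩
    exact ⟨natCast_div_two_pow_le_iff.2 hleft,
      by exact_mod_cast natCast_div_two_pow_add_le_iff.2 hright⟩

theorem dyad_zero_zero : dyad 0 0 = Ico (0 : ℝ) 1 := by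
  simp [dyad]

theorem measurableSet_dyad (n k : ℕ) : MeasurableSet (dyad n k) := measurableSet_Ico

theorem volume_dyad_pos (n k : ℕ) : 0 < volume (dyad n k) := by
  rw [dyad, Real.volume_Ico, ENNReal.ofReal_pos, sub_pos]
  exact dyad_left_lt_right n k

theorem dyad_nonempty (n k : ℕ) : (dyad n k).Nonempty :=
  nonempty_Ico.2 (dyad_left_lt_right n k)

theorem dyad_subset_dyad_zero_zero_iff {n k : ℕ} : dyad n k ⊆ dyad 0 0 ↔ k < 2 ^ n := by
  rw [dyad_subset_iff]
  constructor
  · rintro ⟨d, rfl, -, h⟩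
    rw [zero_add, one_mul] at h
    rwa [zero_add]
  · intro h; exact ⟨n, by simp, by simp, by omega⟩

theorem dyad_subset_Ico_zero_one {n k : ℕ} (h : k < 2 ^ n) : dyad n k ⊆ Ico (0 : ℝ) 1 := by
  rw [← dyad_zero_zero]; exact dyad_subset_dyad_zero_zero_iff.2 h

theorem dyad_succ_two_mul_subset (n k : ℕ) : dyad (n + 1) (2 * k) ⊆ dyad n k :=
  dyad_subset_iff.2 ⟨1, rfl, by omega, by omega⟩

theorem dyad_succ_two_mul_add_one_subset (n k : ℕ) : dyad (n + 1) (2 * k + 1) ⊆ dyad n k :=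
  dyad_subset_iff.2 ⟨1, rfl, by omega, by omega⟩

theorem dyad_subset_iff_eq_or_subset_children {n' k' n k : ℕ} :
    dyad n' k' ⊆ dyad n k ↔ (n', k') = (n, k) ∨ dyad n' k' ⊆ dyad (n + 1) (2 * k) ∨
      dyad n' k' ⊆ dyad (n + 1) (2 * k + 1) := by
  constructor
  · intro h
    obtain ⟨d, rfl, hleft, hright⟩ := dyad_subset_iff.1 h
    cases d with
    | zero =>
      simp only [pow_zero, mul_one] at hleft hright
      exact Or.inl (Prod.ext (add_zero n) (by omega))
    | succ e =>
      right
      rw [pow_succ] at hleft hright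
      simp only [dyad_subset_iff]
      by_cases hk : k' < (2 * k + 1) * 2 ^ e
      · exact Or.inl ⟨e, by omega, by linarith, hk⟩
      · exact Or.inr ⟨e, by omega, by linarith, by linarith⟩
  · rintro (h | h | h)
    · simp only [Prod.mk.injEq] at h; rw [h.1, h.2]
    · exact h.trans (dyad_succ_two_mul_subset n k)
    · exact h.trans (dyad_succ_two_mul_add_one_subset n k)

theorem not_dyad_subset_dyad_succ (n k j : ℕ) : ¬ dyad n k ⊆ dyad (n + 1) j := by
  rw [dyad_subset_iff]; omega

theorem dyad_succ_two_mul_eq (n k : ℕ) :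
    dyad (n + 1) (2 * k) = Ico ((k : ℝ) / 2 ^ n) ((2 * k + 1) / 2 ^ (n + 1)) := by
  rw [dyad, pow_succ]; push_cast; congr 1; field_simp

theorem dyad_succ_two_mul_add_one_eq (n k : ℕ) :
    dyad (n + 1) (2 * k + 1) = Ico ((2 * k + 1 : ℝ) / 2 ^ (n + 1)) ((k + 1) / 2 ^ n) := by
  rw [dyad, pow_succ]; push_cast; congr 1; field_simp; ring

theorem dyad_succ_union (n k : ℕ) :
    dyad (n + 1) (2 * k) ∪ dyad (n + 1) (2 * k + 1) = dyad n k := by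
  rw [dyad_succ_two_mul_eq, dyad_succ_two_mul_add_one_eq, dyad]
  refine Ico_union_Ico_eq_Ico ?_ ?_
  all_goals
    rw [div_le_div_iff₀ (by positivity) (by positivity), pow_succ]
    nlinarith [pow_pos (two_pos (α := ℝ)) n]

theorem disjoint_dyad_succ (n k : ℕ) :
    Disjoint (dyad (n + 1) (2 * k)) (dyad (n + 1) (2 * k + 1)) := by
  rw [dyad_succ_two_mul_eq, dyad_succ_two_mul_add_one_eq]
  exact Ico_disjoint_Ico_same

theorem not_dyad_subset_both_children {n' k' n k : ℕ}
    (h₀ : dyad n' k' ⊆ dyad (n + 1) (2 * k)) :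
    ¬ dyad n' k' ⊆ dyad (n + 1) (2 * k + 1) := fun h₁ =>
  let ⟨_, hx⟩ := dyad_nonempty n' k'
  disjoint_left.1 (disjoint_dyad_succ n k) (h₀ hx) (h₁ hx)

def dyadTree : ℕ → ℕ → ℕ → Finset (ℕ × ℕ)
  | 0, _, _ => ∅
  | d + 1, n, k => insert (n, k) (dyadTree d (n + 1) (2 * k) ∪ dyadTree d (n + 1) (2 * k + 1))

theorem mem_dyadTree {d n k : ℕ} {p : ℕ × ℕ} :
    p ∈ dyadTree d n k ↔ dyad p.1 p.2 ⊆ dyad n k ∧ p.1 < n + d := by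
  induction d generalizing n k with
  | zero =>
    simp only [dyadTree, Finset.notMem_empty, false_iff, not_and, not_lt, add_zero]
    intro h
    obtain ⟨d, hd, -⟩ := dyad_subset_iff.1 h
    omega
  | succ d ih =>
    rw [dyadTree, Finset.mem_insert, Finset.mem_union, ih, ih]
    constructor
    · rintro (rfl | ⟨h, hd⟩ | ⟨h, hd⟩)
      · exact ⟨subset_rfl, by omega⟩
      · exact ⟨h.trans (dyad_succ_two_mul_subset n k), by omega⟩
      · exact ⟨h.trans (dyad_succ_two_mul_add_one_subset n k), by omega⟩
    · rintro ⟨h, hd⟩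
      rcases dyad_subset_iff_eq_or_subset_children.1 h with h | h | h
      · exact Or.inl h
      · exact Or.inr (Or.inl ⟨h, by omega⟩)
      · exact Or.inr (Or.inr ⟨h, by omega⟩)

theorem not_mem_dyadTree_children (d n k : ℕ) :
    (n, k) ∉ dyadTree d (n + 1) (2 * k) ∪ dyadTree d (n + 1) (2 * k + 1) := by
  simp [mem_dyadTree, not_dyad_subset_dyad_succ]

theorem disjoint_dyadTree_children (d n k : ℕ) :
    Disjoint (dyadTree d (n + 1) (2 * k)) (dyadTree d (n + 1) (2 * k + 1)) :=
  Finset.disjoint_left.2 fun _ h₀ h₁ =>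
    not_dyad_subset_both_children (mem_dyadTree.1 h₀).1 (mem_dyadTree.1 h₁).1

def treeSum (a : ℕ → ℕ → ℝ) (d n k : ℕ) : ℝ := ∑ p ∈ dyadTree d n k, a p.1 p.2

section treeSum

variable {a : ℕ → ℕ → ℝ}

@[simp]
theorem treeSum_zero (n k : ℕ) : treeSum a 0 n k = 0 := rfl

theorem treeSum_succ (d n k : ℕ) :
    treeSum a (d + 1) n k =
      a n k + treeSum a d (n + 1) (2 * k) + treeSum a d (n + 1) (2 * k + 1) := by
  rw [treeSum, dyadTree, Finset.sum_insert (not_mem_dyadTree_children d n k),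
    Finset.sum_union (disjoint_dyadTree_children d n k), add_assoc, treeSum, treeSum]

theorem treeSum_nonneg (ha : ∀ n k, 0 ≤ a n k) (d n k : ℕ) : 0 ≤ treeSum a d n k :=
  Finset.sum_nonneg fun p _ => ha p.1 p.2

theorem treeSum_le_of_tsum_le (ha : ∀ n k, 0 ≤ a n k) {B : ℝ} (hB : 0 ≤ B) {n k : ℕ}
    (h : (∑' p : ℕ × ℕ, if dyad p.1 p.2 ⊆ dyad n k then ENNReal.ofReal (a p.1 p.2) else 0) ≤
      ENNReal.ofReal B) (d : ℕ) :
    treeSum a d n k ≤ B := by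
  refine (ENNReal.ofReal_le_ofReal_iff hB).1 (le_trans ?_ h)
  rw [treeSum, ENNReal.ofReal_sum_of_nonneg fun p _ => ha p.1 p.2]
  refine le_of_eq_of_le (Finset.sum_congr rfl fun p hp => ?_) (ENNReal.sum_le_tsum _)
  rw [if_pos (mem_dyadTree.1 hp).1]

theorem tsum_le_ofReal_of_treeSum_le (ha : ∀ n k, 0 ≤ a n k) {B : ℝ}
    (hB : ∀ d, treeSum a d 0 0 ≤ B) :
    (∑' p : ℕ × ℕ, if p.2 < 2 ^ p.1 then ENNReal.ofReal (a p.1 p.2) else 0) ≤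
      ENNReal.ofReal B := by
  rw [ENNReal.tsum_eq_iSup_sum]
  refine iSup_le fun F => ?_
  have hF : F.filter (fun p => p.2 < 2 ^ p.1) ⊆ dyadTree (F.sup Prod.fst + 1) 0 0 := by
    intro p hp
    rw [Finset.mem_filter] at hp
    refine mem_dyadTree.2 ⟨dyad_subset_dyad_zero_zero_iff.2 hp.2, ?_⟩
    have := Finset.le_sup (f := Prod.fst) hp.1
    omega
  calc (∑ p ∈ F, if p.2 < 2 ^ p.1 then ENNReal.ofReal (a p.1 p.2) else 0)
      = ∑ p ∈ F.filter (fun p => p.2 < 2 ^ p.1), ENNReal.ofReal (a p.1 p.2) :=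
        (Finset.sum_filter _ _).symm
    _ ≤ ∑ p ∈ dyadTree (F.sup Prod.fst + 1) 0 0, ENNReal.ofReal (a p.1 p.2) :=
        Finset.sum_le_sum_of_subset hF
    _ = ENNReal.ofReal (treeSum a (F.sup Prod.fst + 1) 0 0) :=
        (ENNReal.ofReal_sum_of_nonneg fun p _ => ha p.1 p.2).symm
    _ ≤ ENNReal.ofReal B := ENNReal.ofReal_le_ofReal (hB _)

end treeSum

theorem sq_div_add_le_of_sq_le_mul {g G W s : ℝ} (hW : 0 < W) (hs : 0 ≤ s)
    (h : g ^ 2 ≤ G * W) :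
    g ^ 2 / (W + s) ≤ G :=
  (div_le_div_of_nonneg_left (sq_nonneg g) hW (le_add_of_nonneg_right hs)).trans
    ((div_le_iff₀ hW).2 h)

theorem treeSum_le_bellman {μ G g W : ℕ → ℕ → ℝ} (hμ : ∀ n k, 0 ≤ μ n k)
    (hW : ∀ n k, k < 2 ^ n → 0 < W n k)
    (hgGW : ∀ n k, k < 2 ^ n → g n k ^ 2 ≤ G n k * W n k)
    (hG : ∀ n k, k < 2 ^ n → G n k = G (n + 1) (2 * k) + G (n + 1) (2 * k + 1))
    (hg : ∀ n k, k < 2 ^ n → g n k = g (n + 1) (2 * k) + g (n + 1) (2 * k + 1))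
    (hWadd : ∀ n k, k < 2 ^ n → W n k = W (n + 1) (2 * k) + W (n + 1) (2 * k + 1))
    (hcarleson : ∀ d n k, k < 2 ^ n → treeSum μ d n k ≤ W n k) (d : ℕ) {n k : ℕ}
    (hk : k < 2 ^ n) :
    treeSum (fun n k => μ n k * (g n k / W n k) ^ 2) d n k ≤
      4 * (G n k - g n k ^ 2 / (W n k + treeSum μ d n k)) := by
  induction d generalizing n k with
  | zero =>
    simpa using sq_div_add_le_of_sq_le_mul (hW n k hk) le_rfl (hgGW n k hk)
  | succ d ih =>
    have hk₀ : 2 * k < 2 ^ (n + 1) := by rw [pow_succ]; omega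
    have hk₁ : 2 * k + 1 < 2 ^ (n + 1) := by rw [pow_succ]; omega
    have hstep := bellman_step (g₁ := g (n + 1) (2 * k)) (g₂ := g (n + 1) (2 * k + 1))
      (hW _ _ hk₀) (hW _ _ hk₁) (treeSum_nonneg hμ d _ _) (treeSum_nonneg hμ d _ _) (hμ n k)
      (by simpa only [treeSum_succ, hWadd n k hk] using hcarleson (d + 1) n k hk)
    rw [treeSum_succ, treeSum_succ, hG n k hk, hg n k hk, hWadd n k hk]
    linarith [ih hk₀, ih hk₁]

theorem sq_integral_mul_le {α : Type*} [MeasurableSpace α] {μ : Measure α} {f g : α → ℝ}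
    (hf : MemLp f 2 μ) (hg : MemLp g 2 μ) :
    (∫ x, f x * g x ∂μ) ^ 2 ≤ (∫ x, f x ^ 2 ∂μ) * ∫ x, g x ^ 2 ∂μ := by
  have hinner : ∀ {u v : α → ℝ} (hu : MemLp u 2 μ) (hv : MemLp v 2 μ),
      inner ℝ (hu.toLp u) (hv.toLp v) = ∫ x, u x * v x ∂μ := fun hu hv => by
    rw [L2.inner_def]
    refine integral_congr_ae ?_
    filter_upwards [hu.coeFn_toLp, hv.coeFn_toLp] with x hux hvx
    simp [hux, hvx, mul_comm]
  have := real_inner_mul_inner_self_le (hf.toLp f) (hg.toLp g)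
  simpa only [hinner, sq] using this

theorem setIntegral_pos_of_ae_pos {α : Type*} [MeasurableSpace α] {μ : Measure α} {s : Set α}
    {u : α → ℝ} (hs : μ s ≠ 0) (hu : IntegrableOn u s μ) (hpos : ∀ᵐ x ∂μ.restrict s, 0 < u x) :
    0 < ∫ x in s, u x ∂μ := by
  rw [integral_pos_iff_support_of_nonneg_ae (hpos.mono fun _ hx => hx.le) hu,
    measure_congr (ae_eq_univ.2 (measure_mono_null (fun x hx => ?_) (ae_iff.1 hpos))),
    Measure.restrict_apply_univ]
  · exact pos_iff_ne_zero.2 hs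
  · exact fun h => hx (Function.mem_support.2 h.ne')

theorem memLp_two_sqrt {α : Type*} [MeasurableSpace α] {μ : Measure α} {u : α → ℝ}
    (hu : Integrable u μ) (hu₀ : 0 ≤ᵐ[μ] u) : MemLp (fun x => Real.sqrt (u x)) 2 μ := by
  rw [memLp_two_iff_integrable_sq (Real.continuous_sqrt.comp_aestronglyMeasurable
    hu.aestronglyMeasurable)]
  refine hu.congr ?_
  filter_upwards [hu₀] with x hx
  rw [Real.sq_sqrt hx]

theorem setIntegral_dyad_eq_add {u : ℝ → ℝ} {n k : ℕ} (hu : IntegrableOn u (dyad n k)) :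
    ∫ x in dyad n k, u x =
      (∫ x in dyad (n + 1) (2 * k), u x) + ∫ x in dyad (n + 1) (2 * k + 1), u x := by
  rw [← dyad_succ_union] at hu ⊢
  exact setIntegral_union (disjoint_dyad_succ n k) (measurableSet_dyad _ _) hu.left_of_union
    hu.right_of_union

theorem davg_mul_dlen (u : ℝ → ℝ) (n k : ℕ) : davg u n k * dlen n = ∫ x in dyad n k, u x := by
  rw [davg, dlen, one_div, inv_pow, mul_comm, ← mul_assoc, inv_mul_cancel₀ (by positivity),
    one_mul]

namespace IsWeight

variable {w : ℝ → ℝ}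

theorem ae_pos_dyad (hw : IsWeight w) {n k : ℕ} (hk : k < 2 ^ n) :
    ∀ᵐ x ∂volume.restrict (dyad n k), 0 < w x :=
  ae_restrict_of_ae_restrict_of_subset (dyad_subset_Ico_zero_one hk) hw.2

theorem integrableOn_dyad (hw : IsWeight w) {n k : ℕ} (hk : k < 2 ^ n) :
    IntegrableOn w (dyad n k) :=
  hw.1.mono_set (dyad_subset_Ico_zero_one hk)

theorem setIntegral_dyad_pos (hw : IsWeight w) {n k : ℕ} (hk : k < 2 ^ n) :
    0 < ∫ x in dyad n k, w x :=
  setIntegral_pos_of_ae_pos (volume_dyad_pos n k).ne' (hw.integrableOn_dyad hk) (hw.ae_pos_dyad hk)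

theorem memLp_sqrt (hw : IsWeight w) :
    MemLp (fun x => Real.sqrt (w x)) 2 (volume.restrict (Ico (0 : ℝ) 1)) :=
  memLp_two_sqrt hw.1 (hw.2.mono fun _ hx => hx.le)

theorem sq_setIntegral_mul_sqrt_le (hw : IsWeight w) {f : ℝ → ℝ}
    (hf : MemLp f 2 (volume.restrict (Ico (0 : ℝ) 1))) {n k : ℕ} (hk : k < 2 ^ n) :
    (∫ x in dyad n k, f x * Real.sqrt (w x)) ^ 2 ≤
      (∫ x in dyad n k, f x ^ 2) * ∫ x in dyad n k, w x := by
  have hrestrict := Measure.restrict_mono (μ := volume) (dyad_subset_Ico_zero_one hk) le_rfl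
  have hsq : ∫ x in dyad n k, Real.sqrt (w x) ^ 2 = ∫ x in dyad n k, w x :=
    integral_congr_ae ((hw.ae_pos_dyad hk).mono fun x hx => Real.sq_sqrt hx.le)
  rw [← hsq]
  exact sq_integral_mul_le (hf.mono_measure hrestrict) (hw.memLp_sqrt.mono_measure hrestrict)

theorem setIntegral_indicator_sqrt_mul_sqrt (hw : IsWeight w) {s : Set ℝ}
    (hs : s ⊆ Ico 0 1) (m j : ℕ) :
    ∫ x in s, (dyad m j).indicator (fun x => Real.sqrt (w x)) x * Real.sqrt (w x) =
      ∫ x in s ∩ dyad m j, w x := by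
  rw [← setIntegral_indicator (measurableSet_dyad m j)]
  refine integral_congr_ae ?_
  filter_upwards [ae_restrict_of_ae_restrict_of_subset hs hw.2] with x hx
  by_cases hxJ : x ∈ dyad m j <;> simp [hxJ, Real.mul_self_sqrt hx.le]

end IsWeight

theorem indicator_sq_eq_indicator_mul (s : Set ℝ) (u : ℝ → ℝ) (x : ℝ) :
    s.indicator u x ^ 2 = s.indicator u x * u x := by
  by_cases hx : x ∈ s <;> simp [hx, sq]

theorem carleson_of_embedding {w : ℝ → ℝ} (hw : IsWeight w) {α : ℕ → ℕ → ℝ} {C₁ : ℝ}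
    (hembed : ∀ f : ℝ → ℝ, MemLp f 2 (volume.restrict (Ico (0 : ℝ) 1)) →
      (∑' p : ℕ × ℕ, if p.2 < 2 ^ p.1 then
          ENNReal.ofReal ((davg (fun t => f t * Real.sqrt (w t)) p.1 p.2) ^ 2 * α p.1 p.2)
        else 0) ≤ ENNReal.ofReal (C₁ * ∫ x in Ico (0 : ℝ) 1, (f x) ^ 2))
    {m j : ℕ} (hj : j < 2 ^ m) :
    (∑' p : ℕ × ℕ, if dyad p.1 p.2 ⊆ dyad m j then
        ENNReal.ofReal ((davg w p.1 p.2) ^ 2 * α p.1 p.2) else 0) ≤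
      ENNReal.ofReal (C₁ * davg w m j * dlen m) := by
  set f := (dyad m j).indicator (fun x => Real.sqrt (w x))
  have hf : MemLp f 2 (volume.restrict (Ico (0 : ℝ) 1)) :=
    hw.memLp_sqrt.indicator (measurableSet_dyad m j)
  have hnorm : ∫ x in Ico (0 : ℝ) 1, f x ^ 2 = davg w m j * dlen m := by
    simp_rw [f, indicator_sq_eq_indicator_mul]
    rw [hw.setIntegral_indicator_sqrt_mul_sqrt subset_rfl,
      inter_eq_right.2 (dyad_subset_Ico_zero_one hj), davg_mul_dlen]
  calc (∑' p : ℕ × ℕ, if dyad p.1 p.2 ⊆ dyad m j then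
          ENNReal.ofReal ((davg w p.1 p.2) ^ 2 * α p.1 p.2) else 0)
      ≤ ∑' p : ℕ × ℕ, if p.2 < 2 ^ p.1 then
          ENNReal.ofReal ((davg (fun t => f t * Real.sqrt (w t)) p.1 p.2) ^ 2 * α p.1 p.2)
        else 0 := by
        refine ENNReal.tsum_le_tsum fun p => ?_
        by_cases hI : dyad p.1 p.2 ⊆ dyad m j
        · have hp : p.2 < 2 ^ p.1 := dyad_subset_dyad_zero_zero_iff.1
            (hI.trans (dyad_subset_dyad_zero_zero_iff.2 hj))
          rw [if_pos hI, if_pos hp, davg, davg,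
            hw.setIntegral_indicator_sqrt_mul_sqrt (dyad_subset_Ico_zero_one hp),
            inter_eq_left.2 hI]
        · rw [if_neg hI]
          exact zero_le
    _ ≤ ENNReal.ofReal (C₁ * ∫ x in Ico (0 : ℝ) 1, f x ^ 2) := hembed f hf
    _ = ENNReal.ofReal (C₁ * davg w m j * dlen m) := by rw [hnorm, mul_assoc]

theorem embedding_of_carleson {w : ℝ → ℝ} (hw : IsWeight w) {α : ℕ → ℕ → ℝ}
    (hα : ∀ n k, 0 ≤ α n k) {C : ℝ} (hC : 0 < C)
    (hcarleson : ∀ d n k, k < 2 ^ n →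
      treeSum (fun n k => davg w n k ^ 2 * α n k) d n k ≤ C * ∫ x in dyad n k, w x)
    {f : ℝ → ℝ} (hf : MemLp f 2 (volume.restrict (Ico (0 : ℝ) 1))) :
    (∑' p : ℕ × ℕ, if p.2 < 2 ^ p.1 then
        ENNReal.ofReal ((davg (fun t => f t * Real.sqrt (w t)) p.1 p.2) ^ 2 * α p.1 p.2)
      else 0) ≤ ENNReal.ofReal (4 * C * ∫ x in Ico (0 : ℝ) 1, f x ^ 2) := by
  set W : ℕ → ℕ → ℝ := fun n k => ∫ x in dyad n k, w x
  set G : ℕ → ℕ → ℝ := fun n k => ∫ x in dyad n k, f x ^ 2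
  set g : ℕ → ℕ → ℝ := fun n k => ∫ x in dyad n k, f x * Real.sqrt (w x)
  set μ : ℕ → ℕ → ℝ := fun n k => davg w n k ^ 2 * α n k / C
  have hμ : ∀ n k, 0 ≤ μ n k := fun n k => by positivity [hα n k]
  have hf2 : IntegrableOn (fun x => f x ^ 2) (Ico (0 : ℝ) 1) := hf.integrable_sq
  have hfw : IntegrableOn (fun x => f x * Real.sqrt (w x)) (Ico (0 : ℝ) 1) :=
    hf.integrable_mul hw.memLp_sqrt
  have hbellman := treeSum_le_bellman (G := G) (g := g) hμ
    (fun n k hk => hw.setIntegral_dyad_pos hk)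
    (fun n k hk => hw.sq_setIntegral_mul_sqrt_le hf hk)
    (fun n k hk => setIntegral_dyad_eq_add (hf2.mono_set (dyad_subset_Ico_zero_one hk)))
    (fun n k hk => setIntegral_dyad_eq_add (hfw.mono_set (dyad_subset_Ico_zero_one hk)))
    (fun n k hk => setIntegral_dyad_eq_add (hw.integrableOn_dyad hk))
    (fun d n k hk => by
      rw [treeSum, ← Finset.sum_div, div_le_iff₀ hC, mul_comm]; exact hcarleson d n k hk)
  refine tsum_le_ofReal_of_treeSum_le (fun n k => mul_nonneg (sq_nonneg _) (hα n k)) fun d => ?_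
  have hW₀ := hw.setIntegral_dyad_pos (n := 0) (k := 0) (by norm_num)
  have hrest : 0 ≤ g 0 0 ^ 2 / (W 0 0 + treeSum μ d 0 0) :=
    div_nonneg (sq_nonneg _) (add_nonneg hW₀.le (treeSum_nonneg hμ d 0 0))
  calc treeSum (fun n k => davg (fun t => f t * Real.sqrt (w t)) n k ^ 2 * α n k) d 0 0
      = C * treeSum (fun n k => μ n k * (g n k / W n k) ^ 2) d 0 0 := by
        rw [treeSum, treeSum, Finset.mul_sum]
        refine Finset.sum_congr rfl fun p hp => ?_
        have hW := hw.setIntegral_dyad_pos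
          (dyad_subset_dyad_zero_zero_iff.1 (mem_dyadTree.1 hp).1)
        simp only [μ, g, W, davg]
        field_simp
    _ ≤ C * (4 * (G 0 0 - g 0 0 ^ 2 / (W 0 0 + treeSum μ d 0 0))) :=
        mul_le_mul_of_nonneg_left (hbellman d (by norm_num)) hC.le
    _ ≤ 4 * C * ∫ x in Ico (0 : ℝ) 1, f x ^ 2 := by
        rw [show G 0 0 = ∫ x in Ico (0 : ℝ) 1, f x ^ 2 by simp only [G, dyad_zero_zero]]
        nlinarith

/-- Lemma 2.1. -/
theorem lemma_2_1 (w : ℝ → ℝ) (hw : IsWeight w)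
    (α : ℕ → ℕ → ℝ) (hα : ∀ n k, 0 ≤ α n k) :
    (∃ C₁ : ℝ, 0 ≤ C₁ ∧
        ∀ f : ℝ → ℝ, MemLp f 2 (volume.restrict (Set.Ico (0 : ℝ) 1)) →
          (∑' p : ℕ × ℕ,
              if p.2 < 2 ^ p.1 then
                ENNReal.ofReal
                  ((davg (fun t => f t * Real.sqrt (w t)) p.1 p.2) ^ 2 * α p.1 p.2)
              else 0) ≤
            ENNReal.ofReal (C₁ * ∫ x in Set.Ico (0 : ℝ) 1, (f x) ^ 2)) ↔
      (∃ C₂ : ℝ, 0 ≤ C₂ ∧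
        ∀ m j : ℕ, j < 2 ^ m →
          (∑' p : ℕ × ℕ,
              if dyad p.1 p.2 ⊆ dyad m j then
                ENNReal.ofReal ((davg w p.1 p.2) ^ 2 * α p.1 p.2)
              else 0) ≤
            ENNReal.ofReal (C₂ * davg w m j * dlen m)) := by
  constructor
  · rintro ⟨C₁, hC₁, hembed⟩
    exact ⟨C₁, hC₁, fun m j hj => carleson_of_embedding hw hembed hj⟩
  · rintro ⟨C₂, hC₂, hcarleson⟩
    refine ⟨4 * (C₂ + 1), by positivity, fun f hf =>
      embedding_of_carleson hw hα (by positivity) (fun d n k hk => ?_) hf⟩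
    have hcar := hcarleson n k hk
    rw [mul_assoc, davg_mul_dlen] at hcar
    have hW := hw.setIntegral_dyad_pos hk
    linarith [treeSum_le_of_tsum_le (fun n k => mul_nonneg (sq_nonneg _) (hα n k))
      (mul_nonneg hC₂ hW.le) hcar d]

end
end

section
/- Lemma 4.1. Suppose the weights v, w satisfy ⟨v⟩_I ⟨w⟩_I ≤ 1 for all I ∈ 𝒟, and fix q ∈ (0,1). For k = 0, 1, 2, … let ℱ_k := { I ∈ 𝒟 : q^{k+1} ≤ ⟨v⟩_I ⟨w⟩_I ≤ q^k }. Then there exists a constant B = B(q) < ∞, independent of k, such that for every k ≥ 0 and every J ∈ 𝒟: Σ_{I ∈ ℱ_k, I ⊆ J} (|⟨v⟩_{I_-} − ⟨v⟩_{I_+}|/⟨v⟩_I) · (|⟨w⟩_{I_-} − ⟨w⟩_{I_+}|/⟨w⟩_I) · |I| ≤ B |J| (i.e. the measures σ_k := Σ_{I∈ℱ_k} (|⟨v⟩_{I_-}−⟨v⟩_{I_+}|/⟨v⟩_I)(|⟨w⟩_{I_-}−⟨w⟩_{I_+}|/⟨w⟩_I)|I| δ_{c(I)} are uniformly Carleson).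 -/
/-!
Write `𝔅(x, y) = (x y)^{1/4}`. For positive `x₁, x₂, y₁, y₂` with midpoints `x, y`,
`(|x₁ - x₂| / x) (|y₁ - y₂| / y) 𝔅(x, y) ≤ 64 (𝔅(x, y) - (𝔅(x₁, y₁) + 𝔅(x₂, y₂)) / 2)`,
so at the averages of `v` and `w` each term of the sum is at most `64 q^{-(k+1)/4} |I|`
times the concavity defect of `𝔅` at `I` when `I ∈ ℱ_k`. Capping `𝔅` at `q^{k/4}` keeps it
dyadically concave and leaves it unchanged on `ℱ_k`, so
`a_I = 64 q^{-(k+1)/4} min(𝔅, q^{k/4}) |I|` dominates the term at `I` plus `a` at the two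
children of `I`. Summing over the subtree of `J` telescopes to `a_J ≤ 64 q^{-1/4} |J|`.
-/

open MeasureTheory Set
open scoped ENNReal Classical

noncomputable section

theorem Nat.le_and_div_two_pow_sub_eq_iff {n i m j : ℕ} :
    m ≤ n ∧ i / 2 ^ (n - m) = j ↔
      j * 2 ^ n ≤ i * 2 ^ m ∧ (i + 1) * 2 ^ m ≤ (j + 1) * 2 ^ n := by
  rcases le_or_gt m n with hmn | hnm
  · obtain ⟨d, rfl⟩ := Nat.exists_eq_add_of_le hmn
    have hm := Nat.two_pow_pos m
    have hd := Nat.two_pow_pos d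
    have h₁ : j * 2 ^ (m + d) ≤ i * 2 ^ m ↔ j * 2 ^ d ≤ i := by
      rw [show j * 2 ^ (m + d) = j * 2 ^ d * 2 ^ m by ring]
      exact Nat.mul_le_mul_right_iff hm
    have h₂ : (i + 1) * 2 ^ m ≤ (j + 1) * 2 ^ (m + d) ↔ i + 1 ≤ j * 2 ^ d + 2 ^ d := by
      rw [show (j + 1) * 2 ^ (m + d) = (j * 2 ^ d + 2 ^ d) * 2 ^ m by ring]
      exact Nat.mul_le_mul_right_iff hm
    rw [h₁, h₂, Nat.add_sub_cancel_left, Nat.div_eq_iff hd]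
    omega
  · obtain ⟨e, rfl⟩ := Nat.exists_eq_add_of_lt hnm
    have hn := Nat.two_pow_pos n
    have he : 2 ≤ 2 ^ (e + 1) := Nat.le_self_pow (by omega) 2
    have h₁ : j * 2 ^ n ≤ i * 2 ^ (n + e + 1) ↔ j ≤ i * 2 ^ (e + 1) := by
      rw [show i * 2 ^ (n + e + 1) = i * 2 ^ (e + 1) * 2 ^ n by ring]
      exact Nat.mul_le_mul_right_iff hn
    have h₂ : (i + 1) * 2 ^ (n + e + 1) ≤ (j + 1) * 2 ^ n ↔
        i * 2 ^ (e + 1) + 2 ^ (e + 1) ≤ j + 1 := by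
      rw [show (i + 1) * 2 ^ (n + e + 1) = (i * 2 ^ (e + 1) + 2 ^ (e + 1)) * 2 ^ n by ring]
      exact Nat.mul_le_mul_right_iff hn
    rw [h₁, h₂]
    omega

theorem dyad_subset_dyad_iff {n i m j : ℕ} :
    dyad n i ⊆ dyad m j ↔ m ≤ n ∧ i / 2 ^ (n - m) = j := by
  rw [Nat.le_and_div_two_pow_sub_eq_iff, dyad, dyad, Ico_subset_Ico_iff (by gcongr; linarith),
    div_le_div_iff₀ (by positivity) (by positivity),
    div_le_div_iff₀ (by positivity) (by positivity)]
  norm_cast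

theorem dyad_left_subset (m j : ℕ) : dyad (m + 1) (2 * j) ⊆ dyad m j :=
  dyad_subset_dyad_iff.2 ⟨by omega, by simp⟩

theorem dyad_right_subset (m j : ℕ) : dyad (m + 1) (2 * j + 1) ⊆ dyad m j :=
  dyad_subset_dyad_iff.2 ⟨by omega, by simp; omega⟩

theorem dyad_subset_Ico_zero_one_s8 {m j : ℕ} (hj : j < 2 ^ m) : dyad m j ⊆ Ico (0 : ℝ) 1 := by
  simpa [dyad] using dyad_subset_dyad_iff.2 ⟨Nat.zero_le m, Nat.div_eq_of_lt hj⟩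

theorem dyad_eq_union (m j : ℕ) :
    dyad m j = dyad (m + 1) (2 * j) ∪ dyad (m + 1) (2 * j + 1) := by
  simp only [dyad]
  push_cast
  rw [pow_succ, show ((j : ℝ) + 1) / 2 ^ m = (2 * j + 1 + 1) / (2 ^ m * 2) by field_simp; ring,
    show (j : ℝ) / 2 ^ m = 2 * j / (2 ^ m * 2) by field_simp, Ico_union_Ico_eq_Ico] <;>
    gcongr <;> linarith

theorem disjoint_dyad_children (m j : ℕ) :
    Disjoint (dyad (m + 1) (2 * j)) (dyad (m + 1) (2 * j + 1)) := by
  simp only [dyad]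
  push_cast
  rw [add_assoc, one_add_one_eq_two]
  exact Ico_disjoint_Ico_same

theorem volume_dyad_pos_s8 (m j : ℕ) : 0 < volume (dyad m j) := by
  rw [dyad, Real.volume_Ico, ENNReal.ofReal_pos, ← sub_div, add_sub_cancel_left]
  positivity

theorem dlen_pos (n : ℕ) : 0 < dlen n := by
  unfold dlen
  positivity

theorem dlen_succ (n : ℕ) : dlen (n + 1) = dlen n / 2 := by
  rw [dlen, dlen, pow_succ]
  ring

/-- The truncated sum over the subtree of `dyad m j` up to depth `N + 1` splits at the root. -/
theorem ite_dyad_subset_lt_succ_eq (F : ℕ → ℕ → ℝ≥0∞) (N m j n i : ℕ) :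
    (if dyad n i ⊆ dyad m j ∧ n < m + (N + 1) then F n i else 0) =
      (if (n, i) = (m, j) then F n i else 0) +
        (if dyad n i ⊆ dyad (m + 1) (2 * j) ∧ n < m + 1 + N then F n i else 0) +
        (if dyad n i ⊆ dyad (m + 1) (2 * j + 1) ∧ n < m + 1 + N then F n i else 0) := by
  simp only [dyad_subset_dyad_iff, Prod.mk.injEq]
  rcases le_or_gt n m with hnm | hmn
  · split_ifs <;> simp_all <;> omega
  · obtain ⟨d, rfl⟩ := Nat.exists_eq_add_of_lt hmn
    rw [show m + d + 1 - m = d + 1 by omega, show m + d + 1 - (m + 1) = d by omega, pow_succ,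
      ← Nat.div_div_eq_div_mul]
    generalize i / 2 ^ d = x
    split_ifs <;> simp_all <;> omega

theorem tsum_dyad_subset_le {F a : ℕ → ℕ → ℝ≥0∞} {m j : ℕ}
    (h : ∀ n i, dyad n i ⊆ dyad m j →
      F n i + a (n + 1) (2 * i) + a (n + 1) (2 * i + 1) ≤ a n i) :
    ∑' p : ℕ × ℕ, (if dyad p.1 p.2 ⊆ dyad m j then F p.1 p.2 else 0) ≤ a m j := by
  have trunc : ∀ N m j, (∀ n i, dyad n i ⊆ dyad m j →
      F n i + a (n + 1) (2 * i) + a (n + 1) (2 * i + 1) ≤ a n i) →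
      ∑' p : ℕ × ℕ, (if dyad p.1 p.2 ⊆ dyad m j ∧ p.1 < m + N then F p.1 p.2 else 0) ≤ a m j := by
    intro N
    induction N with
    | zero =>
      intro m j _
      refine (ENNReal.tsum_eq_zero.2 fun p => if_neg ?_).trans_le zero_le
      rintro ⟨hs, hlt⟩
      have := (dyad_subset_dyad_iff.1 hs).1
      omega
    | succ N ih =>
      intro m j h
      simp_rw [ite_dyad_subset_lt_succ_eq, ENNReal.tsum_add, Prod.mk.eta, tsum_ite_eq]
      calc _ ≤ F m j + a (m + 1) (2 * j) + a (m + 1) (2 * j + 1) := by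
            gcongr
            · exact ih _ _ fun n i hs => h n i (hs.trans (dyad_left_subset m j))
            · exact ih _ _ fun n i hs => h n i (hs.trans (dyad_right_subset m j))
        _ ≤ a m j := h m j subset_rfl
  rw [ENNReal.tsum_eq_iSup_sum]
  refine iSup_le fun s => ?_
  calc _ = ∑ p ∈ s, (if dyad p.1 p.2 ⊆ dyad m j ∧ p.1 < m + (s.sup Prod.fst + 1)
          then F p.1 p.2 else 0) := by
        refine Finset.sum_congr rfl fun p hp => ?_
        have := Finset.le_sup (f := Prod.fst) hp
        simp only [show p.1 < m + (s.sup Prod.fst + 1) by omega, and_true]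
    _ ≤ _ := ENNReal.sum_le_tsum _
    _ ≤ a m j := trunc _ m j h

theorem davg_eq_avg_children {u : ℝ → ℝ} {m j : ℕ} (hu : IntegrableOn u (dyad m j)) :
    davg u m j = (davg u (m + 1) (2 * j) + davg u (m + 1) (2 * j + 1)) / 2 := by
  rw [dyad_eq_union] at hu
  simp only [davg, dyad_eq_union m j, setIntegral_union (disjoint_dyad_children m j)
    measurableSet_Ico hu.left_of_union hu.right_of_union, pow_succ]
  ring

theorem davg_pos {u : ℝ → ℝ} {m j : ℕ} (hu : IntegrableOn u (dyad m j))
    (hpos : ∀ᵐ x ∂volume.restrict (dyad m j), 0 < u x) : 0 < davg u m j := by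
  have hint : 0 < ∫ x in dyad m j, u x := by
    rw [setIntegral_pos_iff_support_of_nonneg_ae (hpos.mono fun x hx => hx.le) hu]
    refine (volume_dyad_pos_s8 m j).trans_le (measure_mono_ae ?_)
    filter_upwards [(ae_restrict_iff' measurableSet_Ico).1 hpos] with x hx hxI
    exact ⟨(hx hxI).ne', hxI⟩
  unfold davg
  positivity

theorem IsWeight.davg_pos {u : ℝ → ℝ} (hu : IsWeight u) {m j : ℕ}
    (hI : dyad m j ⊆ Ico (0 : ℝ) 1) : 0 < davg u m j :=
  _root_.davg_pos (hu.1.mono_set hI) (ae_restrict_of_ae_restrict_of_subset hI hu.2)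

theorem IsWeight.davg_eq_avg_children {u : ℝ → ℝ} (hu : IsWeight u) {m j : ℕ}
    (hI : dyad m j ⊆ Ico (0 : ℝ) 1) :
    davg u m j = (davg u (m + 1) (2 * j) + davg u (m + 1) (2 * j + 1)) / 2 :=
  _root_.davg_eq_avg_children (hu.1.mono_set hI)

theorem Real.sqrt_mul_le_add_div_two {a b : ℝ} (h : 0 ≤ a + b) : √(a * b) ≤ (a + b) / 2 :=
  (Real.sqrt_le_left (by linarith)).2 (by nlinarith [sq_nonneg (a - b)])

theorem Real.sqrt_sqrt_le_three_add_div_four {x : ℝ} (hx : 0 ≤ x) : √√x ≤ (3 + x) / 4 := by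
  have h : √x ≤ (1 + x) / 2 := by
    simpa using Real.sqrt_mul_le_add_div_two (a := 1) (b := x) (by linarith)
  calc √√x ≤ √(1 * ((1 + x) / 2)) := by rw [one_mul]; exact Real.sqrt_le_sqrt h
    _ ≤ (1 + (1 + x) / 2) / 2 := Real.sqrt_mul_le_add_div_two (by linarith)
    _ = (3 + x) / 4 := by ring

theorem sqrt_sqrt_add_sqrt_sqrt_le {s t : ℝ} (hs : |s| ≤ 1) (ht : |t| ≤ 1) :
    √√((1 + s) * (1 + t)) + √√((1 - s) * (1 - t)) ≤ 2 - |s * t| / 8 := by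
  obtain ⟨hs₁, hs₂⟩ := abs_le.1 hs
  obtain ⟨ht₁, ht₂⟩ := abs_le.1 ht
  set a := √√((1 + s) * (1 + t))
  set b := √√((1 - s) * (1 - t))
  have ha : a ^ 2 ≤ (2 + s + t) / 2 := by
    rw [Real.sq_sqrt (Real.sqrt_nonneg _)]
    exact (Real.sqrt_mul_le_add_div_two (by linarith)).trans_eq (by ring)
  have hb : b ^ 2 ≤ (2 - s - t) / 2 := by
    rw [Real.sq_sqrt (Real.sqrt_nonneg _)]
    exact (Real.sqrt_mul_le_add_div_two (by linarith)).trans_eq (by ring)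
  have hab : a * b ≤ (3 + (1 - s ^ 2) * (1 - t ^ 2)) / 4 := by
    rw [← Real.sqrt_mul (Real.sqrt_nonneg _), ← Real.sqrt_mul (by nlinarith),
      show (1 + s) * (1 + t) * ((1 - s) * (1 - t)) = (1 - s ^ 2) * (1 - t ^ 2) by ring]
    exact Real.sqrt_sqrt_le_three_add_div_four (mul_nonneg (by nlinarith) (by nlinarith))
  have hst : |s * t| ≤ s ^ 2 + t ^ 2 - s ^ 2 * t ^ 2 := by
    rw [abs_mul, ← sq_abs s, ← sq_abs t]
    nlinarith [sq_nonneg (|s| - |t|), mul_nonneg (abs_nonneg s) (abs_nonneg t),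
      mul_le_one₀ hs (abs_nonneg t) ht]
  have hst₁ : |s * t| ≤ 1 := by rw [abs_mul]; exact mul_le_one₀ hs (abs_nonneg t) ht
  have hsq : (a + b) ^ 2 ≤ (2 - |s * t| / 8) ^ 2 := by nlinarith [abs_nonneg (s * t)]
  exact (pow_le_pow_iff_left₀ (by positivity) (by linarith) two_ne_zero).1 hsq

theorem abs_div_mul_abs_div_mul_sqrt_sqrt_le {x y s t : ℝ} (hx : 0 < x) (hy : 0 < y)
    (hs : |s| ≤ 1) (ht : |t| ≤ 1) :
    |x * (1 + s) - x * (1 - s)| / x * (|y * (1 + t) - y * (1 - t)| / y) * √√(x * y) ≤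
      64 * (√√(x * y) -
        (√√(x * (1 + s) * (y * (1 + t))) + √√(x * (1 - s) * (y * (1 - t)))) / 2) := by
  have hosc : ∀ {z r : ℝ}, 0 < z → |z * (1 + r) - z * (1 - r)| / z = 2 * |r| :=
    fun {z r} hz => by
      rw [show z * (1 + r) - z * (1 - r) = z * (2 * r) by ring, abs_mul, abs_of_pos hz,
        mul_div_cancel_left₀ _ hz.ne', abs_mul, abs_two]
  have hsplit : ∀ r r' : ℝ, √√(x * r * (y * r')) = √√(x * y) * √√(r * r') := fun r r' => by
    rw [show x * r * (y * r') = x * y * (r * r') by ring, Real.sqrt_mul (by positivity),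
      Real.sqrt_mul (Real.sqrt_nonneg _)]
  rw [hosc hx, hosc hy, hsplit, hsplit]
  have := mul_le_mul_of_nonneg_left (sqrt_sqrt_add_sqrt_sqrt_le hs ht)
    (Real.sqrt_nonneg (√(x * y)))
  rw [abs_mul] at this
  linarith

theorem exists_abs_le_one_eq_mul_one_add {x x₁ x₂ : ℝ} (hx : x = (x₁ + x₂) / 2) (h₁ : 0 < x₁)
    (h₂ : 0 < x₂) : ∃ s, |s| ≤ 1 ∧ x₁ = x * (1 + s) ∧ x₂ = x * (1 - s) := by
  refine ⟨(x₁ - x₂) / (x₁ + x₂), ?_, ?_, ?_⟩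
  · rw [abs_div, abs_of_pos (show 0 < x₁ + x₂ by linarith), div_le_one (by linarith), abs_le]
    constructor <;> linarith
  all_goals subst hx; field_simp; ring

theorem ite_le_div_mul_sub_min {P : Prop} [Decidable P] {C T Φ Φ₁ Φ₂ lo hi : ℝ} (hC : 0 < C)
    (hlo : 0 < lo) (hT : 0 ≤ T) (hΦ : 0 ≤ Φ) (hjump : T * Φ ≤ C * (Φ - (Φ₁ + Φ₂) / 2))
    (hP : P → lo ≤ Φ ∧ Φ ≤ hi) :
    (if P then T else 0) ≤ C / lo * (min Φ hi - (min Φ₁ hi + min Φ₂ hi) / 2) := by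
  split_ifs with h
  · obtain ⟨hloΦ, hΦhi⟩ := hP h
    calc T ≤ T * Φ / lo := by rw [le_div_iff₀ hlo]; exact mul_le_mul_of_nonneg_left hloΦ hT
      _ ≤ C * (Φ - (Φ₁ + Φ₂) / 2) / lo := by gcongr
      _ ≤ C / lo * (min Φ hi - (min Φ₁ hi + min Φ₂ hi) / 2) := by
        rw [min_eq_left hΦhi, div_mul_eq_mul_div]
        gcongr <;> exact min_le_left _ _
  · have havg : (Φ₁ + Φ₂) / 2 ≤ Φ := by nlinarith [mul_nonneg hT hΦ]
    have hmin : (min Φ₁ hi + min Φ₂ hi) / 2 ≤ min Φ hi :=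
      le_min (by linarith [min_le_left Φ₁ hi, min_le_left Φ₂ hi])
        (by linarith [min_le_right Φ₁ hi, min_le_right Φ₂ hi])
    exact mul_nonneg (by positivity) (by linarith)

def relOsc (u : ℝ → ℝ) (n i : ℕ) : ℝ :=
  |davg u (n + 1) (2 * i) - davg u (n + 1) (2 * i + 1)| / davg u n i

def bellman (v w : ℝ → ℝ) (n i : ℕ) : ℝ := √√(davg v n i * davg w n i)

theorem relOsc_nonneg {u : ℝ → ℝ} (hu : IsWeight u) {n i : ℕ}
    (hI : dyad n i ⊆ Ico (0 : ℝ) 1) : 0 ≤ relOsc u n i :=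
  div_nonneg (abs_nonneg _) (hu.davg_pos hI).le

theorem relOsc_mul_relOsc_mul_bellman_le {v w : ℝ → ℝ} (hv : IsWeight v) (hw : IsWeight w)
    {n i : ℕ} (hI : dyad n i ⊆ Ico (0 : ℝ) 1) :
    relOsc v n i * relOsc w n i * bellman v w n i ≤
      64 * (bellman v w n i -
        (bellman v w (n + 1) (2 * i) + bellman v w (n + 1) (2 * i + 1)) / 2) := by
  have hl := (dyad_left_subset n i).trans hI
  have hr := (dyad_right_subset n i).trans hI
  obtain ⟨s, hs, hv₁, hv₂⟩ := exists_abs_le_one_eq_mul_one_add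
    (hv.davg_eq_avg_children hI) (hv.davg_pos hl) (hv.davg_pos hr)
  obtain ⟨t, ht, hw₁, hw₂⟩ := exists_abs_le_one_eq_mul_one_add
    (hw.davg_eq_avg_children hI) (hw.davg_pos hl) (hw.davg_pos hr)
  simp only [relOsc, bellman]
  rw [hv₁, hv₂, hw₁, hw₂]
  exact abs_div_mul_abs_div_mul_sqrt_sqrt_le (hv.davg_pos hI) (hw.davg_pos hI) hs ht

def cappedBellmanMass (q : ℝ) (v w : ℝ → ℝ) (k n i : ℕ) : ℝ :=
  64 / √√(q ^ (k + 1)) * min (bellman v w n i) √√(q ^ k) * dlen n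

theorem cappedBellmanMass_nonneg {q : ℝ} (hq : 0 < q) (v w : ℝ → ℝ) (k n i : ℕ) :
    0 ≤ cappedBellmanMass q v w k n i :=
  mul_nonneg (mul_nonneg (by positivity) (le_min (Real.sqrt_nonneg _) (Real.sqrt_nonneg _)))
    (dlen_pos n).le

theorem cappedBellmanMass_supersolution {q : ℝ} (hq : 0 < q) {v w : ℝ → ℝ} (hv : IsWeight v)
    (hw : IsWeight w) (k : ℕ) {n i : ℕ} (hI : dyad n i ⊆ Ico (0 : ℝ) 1) :
    (if q ^ (k + 1) ≤ davg v n i * davg w n i ∧ davg v n i * davg w n i ≤ q ^ k then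
        ENNReal.ofReal (relOsc v n i * relOsc w n i * dlen n) else 0) +
      ENNReal.ofReal (cappedBellmanMass q v w k (n + 1) (2 * i)) +
      ENNReal.ofReal (cappedBellmanMass q v w k (n + 1) (2 * i + 1)) ≤
      ENNReal.ofReal (cappedBellmanMass q v w k n i) := by
  have hT := mul_nonneg (relOsc_nonneg hv hI) (relOsc_nonneg hw hI)
  have hdefect := ite_le_div_mul_sub_min (P := q ^ (k + 1) ≤ davg v n i * davg w n i ∧
      davg v n i * davg w n i ≤ q ^ k) (Φ := bellman v w n i) (by norm_num) (by positivity)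
    hT (Real.sqrt_nonneg _) (relOsc_mul_relOsc_mul_bellman_le hv hw hI)
    fun h => ⟨Real.sqrt_le_sqrt (Real.sqrt_le_sqrt h.1), Real.sqrt_le_sqrt (Real.sqrt_le_sqrt h.2)⟩
  obtain ⟨T, hT₀, hT_le, hF⟩ : ∃ T, 0 ≤ T ∧ T ≤ _ ∧
      (if q ^ (k + 1) ≤ davg v n i * davg w n i ∧ davg v n i * davg w n i ≤ q ^ k then
        ENNReal.ofReal (relOsc v n i * relOsc w n i * dlen n) else 0) =
        ENNReal.ofReal (T * dlen n) :=
    ⟨_, ite_nonneg hT le_rfl, hdefect, by split_ifs <;> simp⟩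
  have hmass := cappedBellmanMass_nonneg hq v w k
  have hd := dlen_pos n
  rw [hF, ← ENNReal.ofReal_add (by positivity) (hmass _ _),
    ← ENNReal.ofReal_add (add_nonneg (by positivity) (hmass _ _)) (hmass _ _)]
  refine ENNReal.ofReal_le_ofReal ?_
  have := mul_le_mul_of_nonneg_right hT_le hd.le
  simp only [cappedBellmanMass, dlen_succ] at this ⊢
  linarith

theorem lemma_4_1_general (q : ℝ) (hq0 : 0 < q)
    (v w : ℝ → ℝ) (hv : IsWeight v) (hw : IsWeight w) :
    ∃ B : ℝ, 0 ≤ B ∧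
      ∀ k m j : ℕ, j < 2 ^ m →
        (∑' p : ℕ × ℕ,
            if dyad p.1 p.2 ⊆ dyad m j ∧
                q ^ (k + 1) ≤ davg v p.1 p.2 * davg w p.1 p.2 ∧
                davg v p.1 p.2 * davg w p.1 p.2 ≤ q ^ k then
              ENNReal.ofReal
                ((|davg v (p.1 + 1) (2 * p.2) - davg v (p.1 + 1) (2 * p.2 + 1)| /
                    davg v p.1 p.2) *
                  (|davg w (p.1 + 1) (2 * p.2) - davg w (p.1 + 1) (2 * p.2 + 1)| /
                    davg w p.1 p.2) * dlen p.1)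
            else 0) ≤
          ENNReal.ofReal (B * dlen m) := by
  refine ⟨64 / √√q, by positivity, fun k m j hj => ?_⟩
  rw [tsum_congr fun p => ite_and _ _ _ _]
  refine (tsum_dyad_subset_le (a := fun n i => ENNReal.ofReal (cappedBellmanMass q v w k n i))
    fun n i hI => cappedBellmanMass_supersolution hq0 hv hw k
      (hI.trans (dyad_subset_Ico_zero_one_s8 hj))).trans (ENNReal.ofReal_le_ofReal ?_)
  have hsplit : √√(q ^ (k + 1)) = √√(q ^ k) * √√q := by
    rw [pow_succ, Real.sqrt_mul (pow_nonneg hq0.le k), Real.sqrt_mul (Real.sqrt_nonneg _)]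
  calc _ ≤ 64 / √√(q ^ (k + 1)) * √√(q ^ k) * dlen m := by
        unfold cappedBellmanMass
        gcongr
        · exact (dlen_pos m).le
        · exact min_le_right _ _
    _ = 64 / √√q * dlen m := by rw [hsplit]; field_simp

/-- Lemma 4.1. -/
theorem lemma_4_1 (q : ℝ) (hq0 : 0 < q) (hq1 : q < 1)
    (v w : ℝ → ℝ) (hv : IsWeight v) (hw : IsWeight w)
    (hA2 : ∀ n k : ℕ, k < 2 ^ n → davg v n k * davg w n k ≤ 1) :
    ∃ B : ℝ, 0 ≤ B ∧
      ∀ k m j : ℕ, j < 2 ^ m →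
        (∑' p : ℕ × ℕ,
            if dyad p.1 p.2 ⊆ dyad m j ∧
                q ^ (k + 1) ≤ davg v p.1 p.2 * davg w p.1 p.2 ∧
                davg v p.1 p.2 * davg w p.1 p.2 ≤ q ^ k then
              ENNReal.ofReal
                ((|davg v (p.1 + 1) (2 * p.2) - davg v (p.1 + 1) (2 * p.2 + 1)| /
                    davg v p.1 p.2) *
                  (|davg w (p.1 + 1) (2 * p.2) - davg w (p.1 + 1) (2 * p.2 + 1)| /
                    davg w p.1 p.2) * dlen p.1)
            else 0) ≤
          ENNReal.ofReal (B * dlen m) :=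
  lemma_4_1_general q hq0 v w hv hw

end
end

section
/- (Bellman estimate (4.4), case α ∈ (0,1/2).) Let 0 < α < 1/2 and set B(x,y) := (xy)^α. There exists a constant c_α > 0, depending only on α, such that for all real numbers x, y > 0 and x₊, x₋, y₊, y₋ ≥ 0 with x = (x₊ + x₋)/2 and y = (y₊ + y₋)/2: B(x,y) − (B(x₊,y₊) + B(x₋,y₋))/2 ≥ c_α · (xy)^α · (|x₊ − x₋|/x) · (|y₊ − y₋|/y). Moreover B is concave on the quadrant {x ≥ 0, y ≥ 0}. -/
/-!
Write `x± = x (1 ± u)` and `y± = y (1 ± v)` with `|u|, |v| ≤ 1`. The gain then reads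
`(1 + u)^α (1 + v)^α + (1 - u)^α (1 - v)^α ≤ 2 - c (u² + v²)`: by AM-GM each product is at most
the mean of the `2α`-th powers, and for `0 < β < 1` the one-variable bound
`(1 + u)^β + (1 - u)^β ≤ 2 - β (1 - β) u² / 2` follows from a derivative estimate based on
Bernoulli's inequality. Finally `2 |u| |v| ≤ u² + v²`.

Concavity: the weighted AM-GM inequality with weights `α, α, 1 - 2α` puts `(xy)^α` below its
tangent plane `(XY)^α (α x / X + α y / Y + 1 - 2α)` at every interior point `(X, Y)`.
-/

open Real

lemma one_add_mul_self_le_rpow_one_add_of_nonpos {s : ℝ} (hs : -1 < s) {p : ℝ} (hp₁ : -1 ≤ p)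
    (hp₂ : p ≤ 0) : 1 + p * s ≤ (1 + s) ^ p := by
  have hs' : 0 < 1 + s := by linarith
  have hps : 0 < 1 - p * s := by
    rcases le_total 0 s with h | h <;> nlinarith
  calc 1 + p * s ≤ 1 / (1 - p * s) := by rw [le_div_iff₀ hps]; nlinarith [sq_nonneg (p * s)]
    _ ≤ 1 / (1 + s) ^ (-p) := by
        gcongr
        linarith [rpow_one_add_le_one_add_mul_self hs.le (p := -p) (by linarith) (by linarith)]
    _ = (1 + s) ^ p := by rw [rpow_neg hs'.le, one_div, inv_inv]

lemma rpow_one_add_add_rpow_one_sub_le_of_nonneg {β u : ℝ} (hβ₀ : 0 ≤ β) (hβ₁ : β ≤ 1)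
    (hu₀ : 0 ≤ u) (hu₁ : u ≤ 1) :
    (1 + u) ^ β + (1 - u) ^ β ≤ 2 - β * (1 - β) / 2 * u ^ 2 := by
  let G : ℝ → ℝ := fun t => (1 + t) ^ β + (1 - t) ^ β + β * (1 - β) / 2 * t ^ 2
  have hG : AntitoneOn G (Set.Icc 0 1) := by
    refine antitoneOn_of_hasDerivWithinAt_nonpos (convex_Icc 0 1)
      (by fun_prop (disch := positivity))
      (f' := fun t => β * (1 + t) ^ (β - 1) - β * (1 - t) ^ (β - 1) + β * (1 - β) * t) ?_ ?_
    · intro t ht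
      rw [interior_Icc] at ht
      refine HasDerivAt.hasDerivWithinAt ?_
      have hadd := ((hasDerivAt_id t).const_add 1).rpow_const (p := β)
        (Or.inl (by simp; linarith [ht.1]))
      have hsub := ((hasDerivAt_id t).const_sub 1).rpow_const (p := β)
        (Or.inl (by simp; linarith [ht.2]))
      convert (hadd.add hsub).add ((hasDerivAt_pow 2 t).const_mul (β * (1 - β) / 2)) using 1
      · rfl
      · simp only [id, Nat.cast_ofNat]; ring
    · intro t ht
      rw [interior_Icc] at ht
      have hadd : (1 + t) ^ (β - 1) ≤ 1 :=
        rpow_le_one_of_one_le_of_nonpos (by linarith [ht.1]) (by linarith)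
      have hsub := one_add_mul_self_le_rpow_one_add_of_nonpos (s := -t) (by linarith [ht.2])
        (p := β - 1) (by linarith) (by linarith)
      rw [← sub_eq_add_neg] at hsub
      nlinarith
  have := hG ⟨le_rfl, zero_le_one⟩ ⟨hu₀, hu₁⟩ hu₀
  simp only [G] at this
  norm_num at this
  linarith

lemma rpow_one_add_add_rpow_one_sub_le {β u : ℝ} (hβ₀ : 0 ≤ β) (hβ₁ : β ≤ 1) (hu : |u| ≤ 1) :
    (1 + u) ^ β + (1 - u) ^ β ≤ 2 - β * (1 - β) / 2 * u ^ 2 := by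
  have h := rpow_one_add_add_rpow_one_sub_le_of_nonneg hβ₀ hβ₁ (abs_nonneg u) hu
  rcases abs_choice u with hu' | hu' <;> rw [hu'] at h
  · exact h
  · rw [neg_sq, sub_neg_eq_add, ← sub_eq_add_neg] at h
    linarith

lemma rpow_mul_rpow_le_add_rpow_two_mul_div_two {a b α : ℝ} (ha : 0 ≤ a) (hb : 0 ≤ b) :
    a ^ α * b ^ α ≤ (a ^ (2 * α) + b ^ (2 * α)) / 2 := by
  rw [mul_comm 2 α, rpow_mul ha, rpow_mul hb, rpow_two, rpow_two]
  nlinarith [sq_nonneg (a ^ α - b ^ α)]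

lemma rpow_mul_rpow_add_rpow_mul_rpow_le {α u v : ℝ} (hα₀ : 0 ≤ α) (hα₁ : α ≤ 1 / 2)
    (hu : |u| ≤ 1) (hv : |v| ≤ 1) :
    (1 + u) ^ α * (1 + v) ^ α + (1 - u) ^ α * (1 - v) ^ α ≤
      2 - α * (1 - 2 * α) / 2 * (u ^ 2 + v ^ 2) := by
  obtain ⟨hu₀, hu₁⟩ := abs_le.1 hu
  obtain ⟨hv₀, hv₁⟩ := abs_le.1 hv
  have hplus := rpow_mul_rpow_le_add_rpow_two_mul_div_two (α := α)
    (by linarith : 0 ≤ 1 + u) (by linarith : 0 ≤ 1 + v)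
  have hminus := rpow_mul_rpow_le_add_rpow_two_mul_div_two (α := α)
    (by linarith : 0 ≤ 1 - u) (by linarith : 0 ≤ 1 - v)
  have hu' := rpow_one_add_add_rpow_one_sub_le (β := 2 * α) (by linarith) (by linarith) hu
  have hv' := rpow_one_add_add_rpow_one_sub_le (β := 2 * α) (by linarith) (by linarith) hv
  linarith

lemma exists_eq_mul_one_add_and_eq_mul_one_sub {x p m : ℝ} (hx : 0 < x) (hp : 0 ≤ p)
    (hm : 0 ≤ m) (h : x = (p + m) / 2) :
    ∃ u, |u| ≤ 1 ∧ p = x * (1 + u) ∧ m = x * (1 - u) ∧ |p - m| / x = 2 * |u| := by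
  refine ⟨(p - m) / (2 * x), ?_, ?_, ?_, ?_⟩
  · rw [abs_le, le_div_iff₀ (by positivity), div_le_iff₀ (by positivity)]
    constructor <;> linarith
  · field_simp; linarith
  · field_simp; linarith
  · rw [abs_div, abs_of_pos (by positivity : 0 < 2 * x)]
    field_simp

lemma mul_rpow_midpoint_gain {α x y xp xm yp ym : ℝ} (hα₀ : 0 ≤ α) (hα₁ : α ≤ 1 / 2)
    (hx : 0 < x) (hy : 0 < y) (hxp : 0 ≤ xp) (hxm : 0 ≤ xm) (hyp : 0 ≤ yp) (hym : 0 ≤ ym)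
    (hxe : x = (xp + xm) / 2) (hye : y = (yp + ym) / 2) :
    α * (1 - 2 * α) / 8 * (x * y) ^ α * (|xp - xm| / x) * (|yp - ym| / y) ≤
      (x * y) ^ α - ((xp * yp) ^ α + (xm * ym) ^ α) / 2 := by
  obtain ⟨u, hu, rfl, rfl, hdu⟩ := exists_eq_mul_one_add_and_eq_mul_one_sub hx hxp hxm hxe
  obtain ⟨v, hv, rfl, rfl, hdv⟩ := exists_eq_mul_one_add_and_eq_mul_one_sub hy hyp hym hye
  have hsplit : ∀ a b, 0 ≤ a → 0 ≤ b → (x * a * (y * b)) ^ α = (x * y) ^ α * (a ^ α * b ^ α) :=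
    fun a b ha hb => by
      rw [mul_mul_mul_comm, mul_rpow (by positivity) (by positivity), mul_rpow ha hb]
  obtain ⟨hu₀, hu₁⟩ := abs_le.1 hu
  obtain ⟨hv₀, hv₁⟩ := abs_le.1 hv
  rw [hdu, hdv, hsplit _ _ (by linarith) (by linarith), hsplit _ _ (by linarith) (by linarith)]
  have hpair := rpow_mul_rpow_add_rpow_mul_rpow_le hα₀ hα₁ hu hv
  have hamgm := two_mul_le_add_sq |u| |v|
  rw [sq_abs, sq_abs] at hamgm
  have hc : 0 ≤ α * (1 - 2 * α) := mul_nonneg hα₀ (by linarith)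
  have hgain : α * (1 - 2 * α) / 2 * (|u| * |v|) ≤
      1 - ((1 + u) ^ α * (1 + v) ^ α + (1 - u) ^ α * (1 - v) ^ α) / 2 := by
    nlinarith
  calc α * (1 - 2 * α) / 8 * (x * y) ^ α * (2 * |u|) * (2 * |v|)
      = (x * y) ^ α * (α * (1 - 2 * α) / 2 * (|u| * |v|)) := by ring
    _ ≤ (x * y) ^ α * (1 - ((1 + u) ^ α * (1 + v) ^ α + (1 - u) ^ α * (1 - v) ^ α) / 2) := by
      gcongr
    _ = _ := by ring

lemma mul_rpow_le_tangent {α x y X Y : ℝ} (hα₀ : 0 ≤ α) (hα₁ : α ≤ 1 / 2) (hx : 0 ≤ x)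
    (hy : 0 ≤ y) (hX : 0 < X) (hY : 0 < Y) :
    (x * y) ^ α ≤ (X * Y) ^ α * (α * (x / X) + α * (y / Y) + (1 - 2 * α)) := by
  have hamgm := geom_mean_le_arith_mean3_weighted hα₀ hα₀ (by linarith : 0 ≤ 1 - 2 * α)
    (div_nonneg hx hX.le) (div_nonneg hy hY.le) zero_le_one (by ring)
  rw [one_rpow, mul_one, mul_one] at hamgm
  calc (x * y) ^ α = (X * Y) ^ α * ((x / X) ^ α * (y / Y) ^ α) := by
        rw [← mul_rpow (by positivity) (by positivity), ← mul_rpow (by positivity) (by positivity)]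
        congr 1
        field_simp
    _ ≤ _ := by gcongr

lemma mul_rpow_mul_add_mul_rpow_mul_eq_zero {α a b s₁ s₂ t₁ t₂ : ℝ} (hα : α ≠ 0) (ha : 0 ≤ a)
    (hb : 0 ≤ b) (hs₁ : 0 ≤ s₁) (hs₂ : 0 ≤ s₂) (h : a * s₁ + b * s₂ = 0) :
    a * (s₁ * t₁) ^ α + b * (s₂ * t₂) ^ α = 0 := by
  obtain ⟨h₁, h₂⟩ := (add_eq_zero_iff_of_nonneg (by positivity) (by positivity)).1 h
  rcases mul_eq_zero.1 h₁ with rfl | rfl <;> rcases mul_eq_zero.1 h₂ with rfl | rfl <;>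
    simp [zero_rpow hα]

lemma convex_nonneg_quadrant : Convex ℝ {p : ℝ × ℝ | 0 ≤ p.1 ∧ 0 ≤ p.2} := by
  rintro ⟨x₁, y₁⟩ ⟨hx₁, hy₁⟩ ⟨x₂, y₂⟩ ⟨hx₂, hy₂⟩ a b ha hb -
  constructor <;> dsimp <;> positivity

theorem concaveOn_mul_rpow {α : ℝ} (hα₀ : 0 < α) (hα₁ : α ≤ 1 / 2) :
    ConcaveOn ℝ {p : ℝ × ℝ | 0 ≤ p.1 ∧ 0 ≤ p.2} (fun p : ℝ × ℝ => (p.1 * p.2) ^ α) := by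
  refine ⟨convex_nonneg_quadrant, ?_⟩
  rintro ⟨x₁, y₁⟩ ⟨hx₁, hy₁⟩ ⟨x₂, y₂⟩ ⟨hx₂, hy₂⟩ a b ha hb hab
  simp only [Prod.smul_mk, Prod.mk_add_mk, smul_eq_mul]
  rcases (by positivity : 0 ≤ a * x₁ + b * x₂).eq_or_lt with hX | hX
  · rw [← hX, zero_mul, zero_rpow hα₀.ne',
      mul_rpow_mul_add_mul_rpow_mul_eq_zero hα₀.ne' ha hb hx₁ hx₂ hX.symm]
  rcases (by positivity : 0 ≤ a * y₁ + b * y₂).eq_or_lt with hY | hY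
  · rw [← hY, mul_zero, zero_rpow hα₀.ne', mul_comm x₁, mul_comm x₂,
      mul_rpow_mul_add_mul_rpow_mul_eq_zero hα₀.ne' ha hb hy₁ hy₂ hY.symm]
  have h₁ := mul_rpow_le_tangent hα₀.le hα₁ hx₁ hy₁ hX hY
  have h₂ := mul_rpow_le_tangent hα₀.le hα₁ hx₂ hy₂ hX hY
  calc a * (x₁ * y₁) ^ α + b * (x₂ * y₂) ^ α
      ≤ a * (_ * (α * (x₁ / _) + α * (y₁ / _) + (1 - 2 * α)))
        + b * (_ * (α * (x₂ / _) + α * (y₂ / _) + (1 - 2 * α))) := by gcongr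
    _ = ((a * x₁ + b * x₂) * (a * y₁ + b * y₂)) ^ α * (α * ((a * x₁ + b * x₂) / (a * x₁ + b * x₂))
          + α * ((a * y₁ + b * y₂) / (a * y₁ + b * y₂)) + (1 - 2 * α) * (a + b)) := by ring
    _ = _ := by rw [div_self hX.ne', div_self hY.ne', hab]; ring

theorem bellman_estimate_4_4 (α : ℝ) (hα0 : 0 < α) (hα1 : α < 1 / 2) :
    (∃ c : ℝ, 0 < c ∧
      ∀ x y xp xm yp ym : ℝ, 0 < x → 0 < y →
        0 ≤ xp → 0 ≤ xm → 0 ≤ yp → 0 ≤ ym →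
        x = (xp + xm) / 2 → y = (yp + ym) / 2 →
        (x * y) ^ α - ((xp * yp) ^ α + (xm * ym) ^ α) / 2 ≥
          c * (x * y) ^ α * (|xp - xm| / x) * (|yp - ym| / y)) ∧
    ConcaveOn ℝ {p : ℝ × ℝ | 0 ≤ p.1 ∧ 0 ≤ p.2}
      (fun p : ℝ × ℝ => (p.1 * p.2) ^ α) :=
  ⟨⟨α * (1 - 2 * α) / 8, by nlinarith, fun _ _ _ _ _ _ hx hy hxp hxm hyp hym hxe hye =>
      mul_rpow_midpoint_gain hα0.le hα1.le hx hy hxp hxm hyp hym hxe hye⟩,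
    concaveOn_mul_rpow hα0 hα1.le⟩
end

section
/- (Elementary inequality (4.6).) For every α ∈ (0,1/2) there exists a constant c_α > 0, depending only on α, such that for all λ, μ ∈ [−1,1]: 1 − (1/2)·( ((1−λ)(1−μ))^α + ((1+λ)(1+μ))^α ) ≥ c_α |λμ|. -/
/-!
Elementary inequality (4.6): for `α ∈ (0,1/2)` there is `c_α > 0` such that
for all `λ, μ ∈ [-1,1]`,
`1 - (((1-λ)(1-μ))^α + ((1+λ)(1+μ))^α)/2 ≥ c_α |λμ|`.
-/

open Real Set

/-- Bernoulli-type bound: `((1-t)^q)⁻¹ ≥ 1 + q t` for `0 ≤ q`, `t < 1`. -/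
lemma aux_inv_bernoulli (q t : ℝ) (hq0 : 0 ≤ q) (ht1 : t < 1) :
    1 + q * t ≤ ((1 - t) ^ q)⁻¹ := by
  have h1 : (0:ℝ) < 1 - t := by linarith
  have h2 : (1 - t) ^ q ≤ Real.exp (-(q * t)) := by
    calc (1 - t) ^ q ≤ (Real.exp (-t)) ^ q :=
          Real.rpow_le_rpow h1.le (by nlinarith [Real.add_one_le_exp (-t)]) hq0
      _ = Real.exp (-(q * t)) := by rw [← Real.exp_mul]; ring_nf
  have hpos : (0:ℝ) < (1 - t) ^ q := Real.rpow_pos_of_pos h1 q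
  have h3 : (Real.exp (-(q * t)))⁻¹ ≤ ((1 - t) ^ q)⁻¹ := inv_anti₀ hpos h2
  rw [← Real.exp_neg, neg_neg] at h3
  exact le_trans (by nlinarith [Real.add_one_le_exp (q * t)]) h3

/-- One-dimensional key estimate: for `β ∈ (0,1)` and `t ∈ [0,1]`,
`(1-t)^β + (1+t)^β ≤ 2 - (β(1-β)/2) t²`. -/
lemma one_dim_key (β : ℝ) (hβ0 : 0 < β) (hβ1 : β < 1) (t : ℝ) (ht0 : 0 ≤ t) (ht1 : t ≤ 1) :
    (1 - t) ^ β + (1 + t) ^ β + (β * (1 - β) / 2) * t ^ 2 ≤ 2 := by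
  set φ : ℝ → ℝ := fun s => (1 - s) ^ β + (1 + s) ^ β + (β * (1 - β) / 2) * s ^ 2 with hφ
  have hderiv : ∀ s ∈ Ioo (0:ℝ) 1, HasDerivAt φ
      (β * (1 - s) ^ (β - 1) * (-1) + β * (1 + s) ^ (β - 1) * 1
        + (β * (1 - β) / 2) * (2 * s)) s := by
    intro s hs
    have h1 : (1:ℝ) - s ≠ 0 := by have := hs.2; intro h; simp at hs; nlinarith
    have h2 : (1:ℝ) + s ≠ 0 := by have := hs.1; intro h; simp at hs; nlinarith
    have d1 : HasDerivAt (fun x : ℝ => (1 - x) ^ β) (β * (1 - s) ^ (β - 1) * (-1)) s := by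
      have : HasDerivAt (fun x : ℝ => 1 - x) (-1) s :=
        (hasDerivAt_id s).const_sub 1
      have := this.rpow_const (p := β) (Or.inl h1)
      convert this using 1; ring
    have d2 : HasDerivAt (fun x : ℝ => (1 + x) ^ β) (β * (1 + s) ^ (β - 1) * 1) s := by
      have : HasDerivAt (fun x : ℝ => 1 + x) (1) s := (hasDerivAt_id s).const_add 1
      have := this.rpow_const (p := β) (Or.inl h2)
      convert this using 1; ring
    have d3 : HasDerivAt (fun x : ℝ => (β * (1 - β) / 2) * x ^ 2)
        ((β * (1 - β) / 2) * (2 * s)) s := by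
      have : HasDerivAt (fun x : ℝ => x ^ 2) (2 * s) s := by
        simpa using (hasDerivAt_pow 2 s)
      exact this.const_mul _
    exact (d1.add d2).add d3
  have hcont : ContinuousOn φ (Icc 0 1) := by
    apply Continuous.continuousOn
    apply Continuous.add
    apply Continuous.add
    · exact (continuous_const.sub continuous_id).rpow_const (fun x => Or.inr hβ0.le)
    · exact (continuous_const.add continuous_id).rpow_const (fun x => Or.inr hβ0.le)
    · exact continuous_const.mul (continuous_pow 2)
  have hanti : AntitoneOn φ (Icc 0 1) := by
    apply antitoneOn_of_deriv_nonpos (convex_Icc 0 1) hcont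
    · rw [interior_Icc]
      intro s hs
      exact ((hderiv s hs).differentiableAt).differentiableWithinAt
    · rw [interior_Icc]
      intro s hs
      rw [(hderiv s hs).deriv]
      have hs0 := hs.1
      have hs1 := hs.2
      have hle1 : (1 + s) ^ (β - 1) ≤ 1 :=
        Real.rpow_le_one_of_one_le_of_nonpos (by linarith) (by linarith)
      have hge : 1 + (1 - β) * s ≤ (1 - s) ^ (β - 1) := by
        have h1 : (0:ℝ) < 1 - s := by linarith
        have := aux_inv_bernoulli (1 - β) s (by linarith) hs1
        rwa [show β - 1 = -(1 - β) by ring, Real.rpow_neg h1.le]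
      nlinarith [hβ0, hs0]
  have h0 : φ t ≤ φ 0 := hanti (by constructor <;> norm_num) ⟨ht0, ht1⟩ ht0
  have hφ0 : φ 0 = 2 := by
    simp [hφ, Real.one_rpow]; norm_num
  calc (1 - t) ^ β + (1 + t) ^ β + (β * (1 - β) / 2) * t ^ 2 = φ t := rfl
    _ ≤ φ 0 := h0
    _ = 2 := hφ0

/-- Signed version of the one-dimensional estimate, for `l ∈ [-1,1]`. -/
lemma one_dim_key' (β : ℝ) (hβ0 : 0 < β) (hβ1 : β < 1) (l : ℝ) (h1 : -1 ≤ l) (h2 : l ≤ 1) :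
    (1 - l) ^ β + (1 + l) ^ β ≤ 2 - (β * (1 - β) / 2) * l ^ 2 := by
  rcases le_or_gt 0 l with h | h
  · have := one_dim_key β hβ0 hβ1 l h h2; linarith
  · have := one_dim_key β hβ0 hβ1 (-l) (by linarith) (by linarith)
    have e1 : (1:ℝ) - -l = 1 + l := by ring
    have e2 : (1:ℝ) + -l = 1 - l := by ring
    rw [e1, e2, neg_pow] at this
    simp at this
    linarith

theorem elementary_inequality_4_6 (α : ℝ) (hα0 : 0 < α) (hα1 : α < 1 / 2) :
    ∃ c : ℝ, 0 < c ∧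
      ∀ l m : ℝ, -1 ≤ l → l ≤ 1 → -1 ≤ m → m ≤ 1 →
        1 - (((1 - l) * (1 - m)) ^ α + ((1 + l) * (1 + m)) ^ α) / 2 ≥ c * |l * m| := by
  set β : ℝ := 2 * α with hβ
  have hβ0 : 0 < β := by positivity
  have hβ1 : β < 1 := by rw [hβ]; linarith
  set κ : ℝ := β * (1 - β) / 2 with hκdef
  have hκ : 0 < κ := by rw [hκdef]; nlinarith
  refine ⟨κ / 2, by positivity, ?_⟩
  intro l m hl1 hl2 hm1 hm2
  have h1l : (0:ℝ) ≤ 1 - l := by linarith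
  have h1l' : (0:ℝ) ≤ 1 + l := by linarith
  have h1m : (0:ℝ) ≤ 1 - m := by linarith
  have h1m' : (0:ℝ) ≤ 1 + m := by linarith
  rw [Real.mul_rpow h1l h1m, Real.mul_rpow h1l' h1m']
  have sq : ∀ x : ℝ, 0 ≤ x → (x ^ α) ^ 2 = x ^ β := by
    intro x hx
    rw [hβ, mul_comm, Real.rpow_mul hx, ← Real.rpow_natCast (x ^ α) 2]
    norm_num
  have hGl : (1 - l) ^ β + (1 + l) ^ β ≤ 2 - κ * l ^ 2 :=
    one_dim_key' β hβ0 hβ1 l hl1 hl2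
  have hGm : (1 - m) ^ β + (1 + m) ^ β ≤ 2 - κ * m ^ 2 :=
    one_dim_key' β hβ0 hβ1 m hm1 hm2
  rw [← sq _ h1l, ← sq _ h1l'] at hGl
  rw [← sq _ h1m, ← sq _ h1m'] at hGm
  set a := (1 - l) ^ α with ha
  set a' := (1 + l) ^ α with ha'
  set b := (1 - m) ^ α with hb
  set b' := (1 + m) ^ α with hb'
  have hab : a * b ≤ (a ^ 2 + b ^ 2) / 2 := by nlinarith [sq_nonneg (a - b)]
  have hab' : a' * b' ≤ (a' ^ 2 + b' ^ 2) / 2 := by nlinarith [sq_nonneg (a' - b')]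
  have habs : |l * m| ≤ (l ^ 2 + m ^ 2) / 2 := by
    rw [abs_le]
    constructor <;> nlinarith [sq_nonneg (l + m), sq_nonneg (l - m)]
  have := mul_le_mul_of_nonneg_left habs hκ.le
  linarith
end

section
/- (Bellman function for α ∈ (1/2,1], inequalities (4.7)–(4.8).) Let 1/2 < α ≤ 1 and define B(x,y) := (xy)^{1/2} − (1/4)(xy)^α on D := {(x,y) : x ≥ 0, y ≥ 0, xy ≤ 1}. Then: (a) 0 ≤ B(x,y) ≤ (xy)^{1/2} for all (x,y) ∈ D; and (b) there is a constant c_α > 0, depending only on α, such that whenever (x,y) ∈ D with x, y > 0 and (x₊,y₊), (x₋,y₋) ∈ D satisfy x = (x₊+x₋)/2, y = (y₊+y₋)/2, and the entire segment joining (x₋,y₋) to (x₊,y₊) lies in D (i.e. (x + tξ)(y + tη) ≤ 1 for all t ∈ [−1,1], where ξ = (x₊−x₋)/2, η = (y₊−y₋)/2), then B(x,y) − (B(x₊,y₊) + B(x₋,y₋))/2 ≥ c_α (xy)^α (|x₊ − x₋|/x)(|y₊ − y₋|/y). -/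
/-!
Put `K = xy`, `x± = x a±`, `y± = y b±`, so that `a₊ + a₋ = b₊ + b₋ = 2`, and `p = a₊b₊`,
`m = a₋b₋`. By homogeneity the midpoint gap is
`K^{1/2} (1 - (√p + √m)/2) + K^α/4 ((p^α + m^α)/2 - 1)`, and Cauchy–Schwarz gives
`√p + √m ≤ 2`, so `K^{1/2} ≥ K^α` may be used on the first term. With `A = √p`, `B = √m`,
`t = 2α - 1 ∈ (0,1]`, convexity of `exp` gives `A^{1+t} ≥ A + t A log A`, and the third order
Taylor bound for `x log x` gives `|A² + B² - 2| ≤ 6(2 - A - B) + 2(A log A + B log B)`. Since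
`A² + B² - 2 = p + m - 2 = (a₊ - a₋)(b₊ - b₋)/2`, this yields the gain with `c_α = (2α - 1)/32`.
-/

open Real Set

lemma le_of_hasDerivAt_of_sub_mul_deriv_nonneg {f f' : ℝ → ℝ} {a c x : ℝ}
    (hf : ∀ y ∈ Ioi a, HasDerivAt f (f' y) y) (hf' : ∀ y ∈ Ioi a, 0 ≤ (y - c) * f' y)
    (hc : a < c) (hx : a < x) : f c ≤ f x := by
  have hcont : ∀ u v, a < u → ContinuousOn f (Icc u v) := fun u v hu y hy =>
    (hf y (hu.trans_le hy.1)).continuousAt.continuousWithinAt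
  have hderiv : ∀ u v, a < u → ∀ y ∈ interior (Icc u v),
      HasDerivWithinAt f (f' y) (interior (Icc u v)) y := fun u v hu y hy =>
    (hf y (hu.trans_le (interior_subset hy).1)).hasDerivWithinAt
  rcases le_total c x with hcx | hxc
  · refine monotoneOn_of_hasDerivWithinAt_nonneg (convex_Icc c x) (hcont c x hc)
      (hderiv c x hc) (fun y hy => ?_) (left_mem_Icc.2 hcx) (right_mem_Icc.2 hcx) hcx
    rw [interior_Icc] at hy
    exact nonneg_of_mul_nonneg_right (hf' y (hc.trans hy.1)) (sub_pos.2 hy.1)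
  · refine antitoneOn_of_hasDerivWithinAt_nonpos (convex_Icc x c) (hcont x c hx)
      (hderiv x c hx) (fun y hy => ?_) (left_mem_Icc.2 hxc) (right_mem_Icc.2 hxc) hxc
    rw [interior_Icc] at hy
    exact nonpos_of_mul_nonneg_right (hf' y (hx.trans hy.1)) (sub_neg.2 hy.2)

lemma monotoneOn_log_sub_taylor :
    MonotoneOn (fun x => log x - (x - 1) + (x - 1) ^ 2 / 2) (Ioi 0) := by
  refine monotoneOn_of_hasDerivWithinAt_nonneg (f' := fun x => (x - 1) ^ 2 / x)
    (convex_Ioi 0) ?_ (fun x hx => ?_) (fun x hx => ?_)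
  · exact (continuousOn_log.mono fun x hx => ne_of_gt hx).sub (by fun_prop) |>.add (by fun_prop)
  · rw [interior_Ioi] at hx ⊢
    have hx0 : x ≠ 0 := (mem_Ioi.1 hx).ne'
    have hu := (hasDerivAt_id' x).sub_const 1
    have h := ((hasDerivAt_log hx0).fun_sub hu).fun_add ((hu.fun_pow 2).div_const 2)
    refine (h.congr_deriv ?_).hasDerivWithinAt
    field_simp
    ring
  · rw [interior_Ioi] at hx
    exact div_nonneg (sq_nonneg _) (le_of_lt hx)

lemma sub_one_mul_log_sub_taylor_nonneg {x : ℝ} (hx : 0 < x) :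
    0 ≤ (x - 1) * (log x - (x - 1) + (x - 1) ^ 2 / 2) := by
  rcases le_total 1 x with h | h
  · refine mul_nonneg (sub_nonneg.2 h) ?_
    simpa using monotoneOn_log_sub_taylor (mem_Ioi.2 one_pos) (mem_Ioi.2 hx) h
  · refine mul_nonneg_of_nonpos_of_nonpos (sub_nonpos.2 h) ?_
    simpa using monotoneOn_log_sub_taylor (mem_Ioi.2 hx) (mem_Ioi.2 one_pos) h

lemma taylor_le_mul_log {x : ℝ} (hx : 0 ≤ x) :
    (x - 1) + (x - 1) ^ 2 / 2 - (x - 1) ^ 3 / 6 ≤ x * log x := by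
  rcases hx.eq_or_lt with rfl | hx
  · norm_num
  have hf : ∀ y ∈ Ioi (0 : ℝ), HasDerivAt
      (fun z => z * log z - ((z - 1) + (z - 1) ^ 2 / 2 - (z - 1) ^ 3 / 6))
      (log y - (y - 1) + (y - 1) ^ 2 / 2) y := by
    intro y hy
    have hu := (hasDerivAt_id' y).sub_const 1
    refine ((hasDerivAt_mul_log (ne_of_gt hy)).fun_sub
      ((hu.fun_add ((hu.fun_pow 2).div_const 2)).fun_sub ((hu.fun_pow 3).div_const 6))).congr_deriv ?_
    push_cast
    ring
  have := le_of_hasDerivAt_of_sub_mul_deriv_nonneg hf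
    (fun y hy => sub_one_mul_log_sub_taylor_nonneg hy) one_pos hx
  simp only [log_one] at this
  linarith

lemma abs_sq_add_sq_sub_two_le {A B : ℝ} (hA : 0 ≤ A) (hB : 0 ≤ B) (hAB : A + B ≤ 2) :
    |A ^ 2 + B ^ 2 - 2| ≤ 6 * (2 - A - B) + 2 * (A * log A + B * log B) := by
  have hlogA := taylor_le_mul_log hA
  have hlogB := taylor_le_mul_log hB
  have he : 0 ≤ 2 - A - B := by linarith
  rw [abs_le]
  constructor
  · nlinarith [mul_nonneg (sq_nonneg (A - 1)) (by linarith : (0 : ℝ) ≤ 2 - A),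
      mul_nonneg (sq_nonneg (B - 1)) (by linarith : (0 : ℝ) ≤ 2 - B)]
  · nlinarith [mul_nonneg he (sq_nonneg (A - B)), pow_nonneg he 3]

lemma add_mul_mul_log_le_rpow_one_add {A : ℝ} (hA : 0 ≤ A) (t : ℝ) :
    A + t * (A * log A) ≤ A ^ (1 + t) := by
  rcases hA.eq_or_lt with rfl | hA
  · simpa using rpow_nonneg le_rfl (1 + t)
  calc A + t * (A * log A) = A * (log A * t + 1) := by ring
    _ ≤ A * A ^ t := by
      rw [rpow_def_of_pos hA]
      exact mul_le_mul_of_nonneg_left (add_one_le_exp _) hA.le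
    _ = A ^ (1 + t) := by rw [rpow_add hA, rpow_one]

lemma mul_abs_sq_add_sq_sub_two_le {A B t : ℝ} (hA : 0 ≤ A) (hB : 0 ≤ B) (hAB : A + B ≤ 2)
    (ht0 : 0 ≤ t) (ht1 : t ≤ 1) :
    t * |A ^ 2 + B ^ 2 - 2| / 16 ≤
      (1 - (A + B) / 2) + ((A ^ (1 + t) + B ^ (1 + t)) / 2 - 1) / 4 := by
  have hkey := mul_le_mul_of_nonneg_left (abs_sq_add_sq_sub_two_le hA hB hAB) ht0
  have hA' := add_mul_mul_log_le_rpow_one_add hA t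
  have hB' := add_mul_mul_log_le_rpow_one_add hB t
  linarith [mul_nonneg (sub_nonneg.2 ht1) (sub_nonneg.2 hAB)]

noncomputable def bellmanB (α K : ℝ) : ℝ := K ^ ((1 : ℝ) / 2) - 1 / 4 * K ^ α

lemma bellmanB_midpoint_gap {α K p m : ℝ} (hα0 : 1 / 2 < α) (hα1 : α ≤ 1) (hK0 : 0 ≤ K)
    (hK1 : K ≤ 1) (hp : 0 ≤ p) (hm : 0 ≤ m) (hpm : √p + √m ≤ 2) :
    (2 * α - 1) / 16 * K ^ α * |p + m - 2| ≤
      bellmanB α K - (bellmanB α (K * p) + bellmanB α (K * m)) / 2 := by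
  have hpow : ∀ q : ℝ, 0 ≤ q → q ^ α = √q ^ (1 + (2 * α - 1)) := fun q hq => by
    rw [sqrt_eq_rpow, ← rpow_mul hq]; ring_nf
  have hmul : ∀ q : ℝ, 0 ≤ q → (K * q) ^ ((1 : ℝ) / 2) = K ^ ((1 : ℝ) / 2) * √q := fun q hq => by
    rw [mul_rpow hK0 hq, sqrt_eq_rpow]
  have hgain := mul_abs_sq_add_sq_sub_two_le (sqrt_nonneg p) (sqrt_nonneg m) hpm
    (t := 2 * α - 1) (by linarith) (by linarith)
  rw [sq_sqrt hp, sq_sqrt hm, ← hpow p hp, ← hpow m hm] at hgain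
  have hKα : K ^ α ≤ K ^ ((1 : ℝ) / 2) := rpow_le_rpow_of_exponent_ge' hK0 hK1 (by norm_num) hα0.le
  have hconc : K ^ α * (1 - (√p + √m) / 2) ≤ K ^ ((1 : ℝ) / 2) * (1 - (√p + √m) / 2) :=
    mul_le_mul_of_nonneg_right hKα (by linarith)
  have hscaled := mul_le_mul_of_nonneg_left hgain (rpow_nonneg hK0 α)
  simp only [bellmanB, hmul p hp, hmul m hm, mul_rpow hK0 hp, mul_rpow hK0 hm]
  linarith

lemma sqrt_mul_add_sqrt_mul_le {a b c d : ℝ} (ha : 0 ≤ a) (hb : 0 ≤ b) (hc : 0 ≤ c)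
    (hd : 0 ≤ d) : √(a * b) + √(c * d) ≤ √((a + c) * (b + d)) := by
  rw [sqrt_mul ha, sqrt_mul hc]
  refine le_sqrt_of_sq_le ?_
  have := sq_sqrt ha; have := sq_sqrt hb; have := sq_sqrt hc; have := sq_sqrt hd
  nlinarith [sq_nonneg (√a * √d - √c * √b)]

lemma bellmanB_midpoint_gap_of_add_eq_two {α K a b c d : ℝ} (hα0 : 1 / 2 < α) (hα1 : α ≤ 1)
    (hK0 : 0 ≤ K) (hK1 : K ≤ 1) (ha : 0 ≤ a) (hb : 0 ≤ b) (hc : 0 ≤ c) (hd : 0 ≤ d)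
    (hac : a + c = 2) (hbd : b + d = 2) :
    (2 * α - 1) / 32 * K ^ α * |a - c| * |b - d| ≤
      bellmanB α K - (bellmanB α (K * (a * b)) + bellmanB α (K * (c * d))) / 2 := by
  have hsqrt : √(a * b) + √(c * d) ≤ 2 := by
    simpa [hac, hbd] using sqrt_mul_add_sqrt_mul_le ha hb hc hd
  have hgap := bellmanB_midpoint_gap hα0 hα1 hK0 hK1 (mul_nonneg ha hb) (mul_nonneg hc hd) hsqrt
  have hprod : a * b + c * d - 2 = (a - c) * (b - d) / 2 := by
    linear_combination (b + d) / 2 * hac + hbd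
  rw [hprod, abs_div, abs_mul, abs_two] at hgap
  linarith

theorem bellman_4_7_4_8 (α : ℝ) (hα0 : 1 / 2 < α) (hα1 : α ≤ 1) :
    (∀ x y : ℝ, 0 ≤ x → 0 ≤ y → x * y ≤ 1 →
      0 ≤ (x * y) ^ ((1 : ℝ) / 2) - (1 / 4) * (x * y) ^ α ∧
      (x * y) ^ ((1 : ℝ) / 2) - (1 / 4) * (x * y) ^ α ≤ (x * y) ^ ((1 : ℝ) / 2)) ∧
    (∃ c : ℝ, 0 < c ∧
      ∀ x y xp xm yp ym : ℝ, 0 < x → 0 < y →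
        0 ≤ xp → 0 ≤ xm → 0 ≤ yp → 0 ≤ ym →
        xp * yp ≤ 1 → xm * ym ≤ 1 → x * y ≤ 1 →
        x = (xp + xm) / 2 → y = (yp + ym) / 2 →
        (∀ t : ℝ, -1 ≤ t → t ≤ 1 →
          (x + t * ((xp - xm) / 2)) * (y + t * ((yp - ym) / 2)) ≤ 1) →
        ((x * y) ^ ((1 : ℝ) / 2) - (1 / 4) * (x * y) ^ α) -
            (((xp * yp) ^ ((1 : ℝ) / 2) - (1 / 4) * (xp * yp) ^ α) +
              ((xm * ym) ^ ((1 : ℝ) / 2) - (1 / 4) * (xm * ym) ^ α)) / 2 ≥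
          c * (x * y) ^ α * (|xp - xm| / x) * (|yp - ym| / y)) := by
  refine ⟨fun x y hx hy hxy => ?_, (2 * α - 1) / 32, by linarith, ?_⟩
  · have hK := mul_nonneg hx hy
    have hKα : (x * y) ^ α ≤ (x * y) ^ ((1 : ℝ) / 2) :=
      rpow_le_rpow_of_exponent_ge' hK hxy (by norm_num) hα0.le
    have := rpow_nonneg hK α
    constructor <;> linarith
  · intro x y xp xm yp ym hx hy hxp hxm hyp hym _ _ hxy hxe hye _
    have hgap := bellmanB_midpoint_gap_of_add_eq_two hα0 hα1 (mul_nonneg hx.le hy.le) hxy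
      (div_nonneg hxp hx.le) (div_nonneg hyp hy.le) (div_nonneg hxm hx.le) (div_nonneg hym hy.le)
      (by field_simp; linarith) (by field_simp; linarith)
    have hp : x * y * (xp / x * (yp / y)) = xp * yp := by field_simp
    have hm : x * y * (xm / x * (ym / y)) = xm * ym := by field_simp
    rw [hp, hm, ← sub_div, ← sub_div, abs_div, abs_div, abs_of_pos hx, abs_of_pos hy] at hgap
    exact hgap
end

section
/- Lemma 7.2. Let C > 0 and define Q(X,x,w,Y,y,v,M,N) := C X + C Y − x²/(w+M) − y²/(v+N) on the domain D_Q := { b = (X,x,w,Y,y,v,M,N) : all coordinates ≥ 0, w > 0, v > 0, x² ≤ Xw, y² ≤ Yv, M ≤ Cw, N ≤ Cv }. Then with γ := (1+C)^{-2} the following holds: whenever b, b₋, b₊ ∈ D_Q are such that each of the coordinates X, x, w, Y, y, v of b equals the average of the corresponding coordinates of b₋ and b₊, and M ≥ (M₋+M₊)/2, N ≥ (N₋+N₊)/2, one has Q(b) − (Q(b₋) + Q(b₊))/2 ≥ γ (x²/w²)(M − (M₋+M₊)/2) + γ (y²/v²)(N − (N₋+N₊)/2). -/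
/-!
Lemma 7.2: the function `Q = CX + CY - x²/(w+M) - y²/(v+N)` satisfies the
midpoint concavity inequality with gain
`γ (x²/w²)(M - (M₋+M₊)/2) + γ (y²/v²)(N - (N₋+N₊)/2)`, `γ = (1+C)⁻²`,
on its natural domain.
-/

noncomputable section

lemma convex_sq_div (xm sm xp sp : ℝ) (hsm : 0 < sm) (hsp : 0 < sp) :
    ((xm + xp) / 2) ^ 2 / ((sm + sp) / 2) ≤ (xm ^ 2 / sm + xp ^ 2 / sp) / 2 := by
  have e : (xm ^ 2 / sm + xp ^ 2 / sp) / 2 = (xm ^ 2 * sp + xp ^ 2 * sm) / (2 * (sm * sp)) := by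
    rw [div_add_div _ _ hsm.ne' hsp.ne', div_div, mul_comm (sm * sp) 2]; ring_nf
  rw [e, div_le_div_iff₀ (by positivity) (by positivity)]
  nlinarith [sq_nonneg (xm * sp - xp * sm), mul_pos hsm hsp]

lemma aux_part (C : ℝ) (hC : 0 < C) (x w M xm wm Mm xp wp Mp : ℝ)
    (hw : 0 < w) (hwm : 0 < wm) (hwp : 0 < wp)
    (hMm : 0 ≤ Mm) (hMp : 0 ≤ Mp)
    (hMcw : M ≤ C * w)
    (hx : x = (xm + xp) / 2) (hwav : w = (wm + wp) / 2)
    (hM : M ≥ (Mm + Mp) / 2) :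
    -(x ^ 2 / (w + M)) + (xm ^ 2 / (wm + Mm) + xp ^ 2 / (wp + Mp)) / 2 ≥
      ((1 + C) ^ 2)⁻¹ * (x ^ 2 / w ^ 2) * (M - (Mm + Mp) / 2) := by
  set Mb := (Mm + Mp) / 2 with hMb
  have hMb0 : 0 ≤ Mb := by positivity
  have hM0 : 0 ≤ M := le_trans hMb0 hM
  have hsm : 0 < wm + Mm := by linarith
  have hsp : 0 < wp + Mp := by linarith
  have hs : 0 < w + Mb := by linarith
  have hsM : 0 < w + M := by linarith
  -- convexity step
  have step1 : x ^ 2 / (w + Mb) ≤ (xm ^ 2 / (wm + Mm) + xp ^ 2 / (wp + Mp)) / 2 := by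
    have := convex_sq_div xm (wm + Mm) xp (wp + Mp) hsm hsp
    have he : ((wm + Mm) + (wp + Mp)) / 2 = w + Mb := by rw [hwav, hMb]; ring
    rw [he, ← hx] at this
    exact this
  -- monotonicity / quantitative step
  have hMbCw : Mb ≤ C * w := le_trans hM hMcw
  have step2 : x ^ 2 / (w + Mb) - x ^ 2 / (w + M) ≥
      ((1 + C) ^ 2)⁻¹ * (x ^ 2 / w ^ 2) * (M - Mb) := by
    have e : x ^ 2 / (w + Mb) - x ^ 2 / (w + M)
        = x ^ 2 * (M - Mb) / ((w + M) * (w + Mb)) := by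
      field_simp; ring
    rw [e]
    have hden : (w + M) * (w + Mb) ≤ (1 + C) ^ 2 * w ^ 2 := by nlinarith
    have hx2 : 0 ≤ x ^ 2 := sq_nonneg x
    have hMM : 0 ≤ M - Mb := by linarith
    have hrhs : ((1 + C) ^ 2)⁻¹ * (x ^ 2 / w ^ 2) * (M - Mb)
        = x ^ 2 * (M - Mb) / ((1 + C) ^ 2 * w ^ 2) := by
      field_simp
    rw [hrhs, ge_iff_le]
    gcongr
  linarith


/-- The Bellman function of Lemma 7.2. -/
def Qfun (C X x w Y y v M N : ℝ) : ℝ :=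
  C * X + C * Y - x ^ 2 / (w + M) - y ^ 2 / (v + N)

/-- The domain `D_Q`. -/
def InDQ (C X x w Y y v M N : ℝ) : Prop :=
  0 ≤ X ∧ 0 ≤ x ∧ 0 < w ∧ 0 ≤ Y ∧ 0 ≤ y ∧ 0 < v ∧ 0 ≤ M ∧ 0 ≤ N ∧
    x ^ 2 ≤ X * w ∧ y ^ 2 ≤ Y * v ∧ M ≤ C * w ∧ N ≤ C * v

/-- Lemma 7.2. -/
theorem lemma_7_2 (C : ℝ) (hC : 0 < C)
    (X x w Y y v M N Xm xm wm Ym ym vm Mm Nm Xp xp wp Yp yp vp Mp Np : ℝ)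
    (hb : InDQ C X x w Y y v M N) (hbm : InDQ C Xm xm wm Ym ym vm Mm Nm)
    (hbp : InDQ C Xp xp wp Yp yp vp Mp Np)
    (hX : X = (Xm + Xp) / 2) (hx : x = (xm + xp) / 2) (hw : w = (wm + wp) / 2)
    (hY : Y = (Ym + Yp) / 2) (hy : y = (ym + yp) / 2) (hv : v = (vm + vp) / 2)
    (hM : M ≥ (Mm + Mp) / 2) (hN : N ≥ (Nm + Np) / 2) :
    Qfun C X x w Y y v M N -
        (Qfun C Xm xm wm Ym ym vm Mm Nm + Qfun C Xp xp wp Yp yp vp Mp Np) / 2 ≥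
      ((1 + C) ^ 2)⁻¹ * (x ^ 2 / w ^ 2) * (M - (Mm + Mp) / 2) +
        ((1 + C) ^ 2)⁻¹ * (y ^ 2 / v ^ 2) * (N - (Nm + Np) / 2) := by
  obtain ⟨hX0, hx0, hw0, hY0, hy0, hv0, hM0, hN0, hxX, hyY, hMcw, hNcv⟩ := hb
  obtain ⟨hXm0, hxm0, hwm0, hYm0, hym0, hvm0, hMm0, hNm0, hxXm, hyYm, hMcwm, hNcvm⟩ := hbm
  obtain ⟨hXp0, hxp0, hwp0, hYp0, hyp0, hvp0, hMp0, hNp0, hxXp, hyYp, hMcwp, hNcvp⟩ := hbp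
  have hA := aux_part C hC x w M xm wm Mm xp wp Mp hw0 hwm0 hwp0 hMm0 hMp0 hMcw hx hw hM
  have hB := aux_part C hC y v N ym vm Nm yp vp Np hv0 hvm0 hvp0 hNm0 hNp0 hNcv hy hv hN
  subst hX hY
  simp only [Qfun]
  linarith

end
end
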